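/- arXiv:2107.07252 — 4 statements merged into one kernel-verified Lean document; each statement's English description precedes it below -/
import Mathlib

section
/- Let Ψ ∈ C_c^∞(ℝ³ × ℝ³; ℝ), let x, y ∈ ℝ³ with x ≠ 0, set k = x/|x|, and let h, i be such that (k, h, i) is an orthonormal basis of ℝ³. For θ ∈ [0, π/2] and φ ∈ [0, 2π] set p(φ) = cos φ · h + sin φ · i and σ(φ) = cos θ · k + sin θ · p(φ). Then |(1/2π) ∫₀^{2π} [Ψ(|x|σ(φ), y) + Ψ(−|x|σ(φ), y) − Ψ(x, y) − Ψ(−x, y)] dφ| ≤ 2 L₂ |2x|² (1 − cos θ), where L₂ = sup_{(x,y)} ‖Dₓ²Ψ(x,y)‖ (supremum of the operator norm of the Hessian of Ψ in its first variable). Since |σ(φ) − k|² = 2(1 − cos θ), the right-hand side equals L₂ |2x|² |σ − k|². -/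
noncomputable section
open Real MeasureTheory
open scoped RealInnerProductSpace

abbrev E3 : Type := EuclideanSpace ℝ (Fin 3)

/-!
Let `f = Ψ(·, y)`. Compact support bounds the partial Hessian, so the supremum `L₂` is a genuine
bound and `∇f` is `L₂`-Lipschitz. Second-order Taylor expansions of `f` at `x` and at `-x`
reduce the integrand, up to an error `2 L₂ |a - x|² = 4 L₂ |x|² (1 - cos θ)` with
`a = |x| σ(φ)`, to the linear term `⟪∇f(x) - ∇f(-x), a - x⟫`. Averaging over `φ` kills the
components of `a - x` along `h` and `i`, leaving `(cos θ - 1) ⟪∇f(x) - ∇f(-x), x⟫`, which is at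
most `2 L₂ |x|² (1 - cos θ)` because `|∇f(x) - ∇f(-x)| ≤ 2 L₂ |x|`.
-/

open InnerProductSpace ContinuousLinearMap
open scoped NNReal

section PartialDerivative

variable {E F : Type*} [NormedAddCommGroup E] [NormedSpace ℝ E]
  [NormedAddCommGroup F] [NormedSpace ℝ F]

theorem exists_hasFDerivAt_fderiv_partial_norm_le {Ψ : E × F → ℝ} (hΨ : ContDiff ℝ 2 Ψ)
    (b : F) (z : E) :
    ∃ M : E →L[ℝ] E →L[ℝ] ℝ, HasFDerivAt (fderiv ℝ fun w => Ψ (w, b)) M z ∧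
      ‖M‖ ≤ ‖fderiv ℝ (fderiv ℝ Ψ) (z, b)‖ := by
  let P : (E × F →L[ℝ] ℝ) →L[ℝ] E →L[ℝ] ℝ := (compL ℝ E (E × F) ℝ).flip (inl ℝ E F)
  have hP : ‖P‖ ≤ 1 := by
    refine opNorm_le_bound _ zero_le_one fun φ => ?_
    calc ‖φ ∘L inl ℝ E F‖ ≤ ‖φ‖ * ‖inl ℝ E F‖ := opNorm_comp_le _ _
      _ ≤ 1 * ‖φ‖ := by
        rw [one_mul]; exact mul_le_of_le_one_right (norm_nonneg φ) (norm_inl_le_one ℝ E F)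
  have hpartial : (fderiv ℝ fun w => Ψ (w, b)) = fun u => P (fderiv ℝ Ψ (u, b)) := by
    funext u
    exact ((hΨ.differentiable two_ne_zero (u, b)).hasFDerivAt.comp u
      (hasFDerivAt_prodMk_left u b)).fderiv
  have hD : HasFDerivAt (fderiv ℝ Ψ) (fderiv ℝ (fderiv ℝ Ψ) (z, b)) (z, b) :=
    ((hΨ.fderiv_right (m := 1) le_rfl).differentiable one_ne_zero _).hasFDerivAt
  refine ⟨P ∘L (fderiv ℝ (fderiv ℝ Ψ) (z, b) ∘L inl ℝ E F),
    hpartial ▸ P.hasFDerivAt.comp z (hD.comp z (hasFDerivAt_prodMk_left z b)), ?_⟩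
  calc ‖P ∘L (fderiv ℝ (fderiv ℝ Ψ) (z, b) ∘L inl ℝ E F)‖
      ≤ ‖P‖ * (‖fderiv ℝ (fderiv ℝ Ψ) (z, b)‖ * ‖inl ℝ E F‖) :=
        (opNorm_comp_le _ _).trans (by gcongr; exact opNorm_comp_le _ _)
    _ ≤ 1 * (‖fderiv ℝ (fderiv ℝ Ψ) (z, b)‖ * 1) := by gcongr; exact norm_inl_le_one ℝ E F
    _ = ‖fderiv ℝ (fderiv ℝ Ψ) (z, b)‖ := by ring

theorem exists_bound_hasFDerivAt_fderiv_partial {Ψ : E × F → ℝ} (hΨ : ContDiff ℝ 2 Ψ)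
    (hΨc : HasCompactSupport Ψ) :
    ∃ C, ∀ (b : F) (z : E), ∃ M : E →L[ℝ] E →L[ℝ] ℝ,
      HasFDerivAt (fderiv ℝ fun w => Ψ (w, b)) M z ∧ ‖M‖ ≤ C := by
  obtain ⟨C, hC⟩ := ((hΨ.fderiv_right (m := 1) le_rfl).continuous_fderiv one_ne_zero)
    |>.bounded_above_of_compact_support ((hΨc.fderiv ℝ).fderiv ℝ)
  refine ⟨C, fun b z => ?_⟩
  obtain ⟨M, hM, hMnorm⟩ := exists_hasFDerivAt_fderiv_partial_norm_le hΨ b z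
  exact ⟨M, hM, hMnorm.trans (hC _)⟩

end PartialDerivative

section PartialGradient

variable {E F : Type*} [NormedAddCommGroup E] [InnerProductSpace ℝ E] [CompleteSpace E]
  [NormedAddCommGroup F] [NormedSpace ℝ F]

theorem HasFDerivAt.gradient_of_fderiv {f : E → ℝ} {M : E →L[ℝ] E →L[ℝ] ℝ} {z : E}
    (h : HasFDerivAt (fderiv ℝ f) M z) :
    HasFDerivAt (gradient f)
      (((toDual ℝ E).symm.toLinearIsometry.toContinuousLinearMap :
        StrongDual ℝ E →L[ℝ] E) ∘L M) z :=
  ((toDual ℝ E).symm.toLinearIsometry.toContinuousLinearMap : StrongDual ℝ E →L[ℝ] E)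
    |>.hasFDerivAt.comp z h

theorem lipschitzWith_gradient_partial {Ψ : E × F → ℝ} (hΨ : ContDiff ℝ 2 Ψ)
    (hΨc : HasCompactSupport Ψ) (b : F) :
    LipschitzWith
      (⨆ q : E × F, ‖fderiv ℝ (fun z => gradient (fun w => Ψ (w, q.2)) z) q.1‖).toNNReal
      (gradient fun w => Ψ (w, b)) := by
  obtain ⟨C, hC⟩ := exists_bound_hasFDerivAt_fderiv_partial hΨ hΨc
  have hgrad : ∀ (b : F) (z : E), ∃ M : E →L[ℝ] E,
      HasFDerivAt (gradient fun w => Ψ (w, b)) M z ∧ ‖M‖ ≤ C := by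
    intro b z
    obtain ⟨M, hM, hMC⟩ := hC b z
    refine ⟨_, hM.gradient_of_fderiv, (opNorm_comp_le _ _).trans ?_⟩
    exact (mul_le_of_le_one_left (norm_nonneg M)
      (LinearIsometry.norm_toContinuousLinearMap_le _)).trans hMC
  have hbdd : BddAbove (Set.range fun q : E × F =>
      ‖fderiv ℝ (fun z => gradient (fun w => Ψ (w, q.2)) z) q.1‖) := by
    refine ⟨C, ?_⟩
    rintro _ ⟨⟨z, b⟩, rfl⟩
    obtain ⟨M, hM, hMC⟩ := hgrad b z
    simpa only [hM.fderiv] using hMC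
  refine lipschitzWith_of_nnnorm_fderiv_le
    (fun z => (hgrad b z).choose_spec.1.differentiableAt) fun z => ?_
  rw [Real.le_toNNReal_iff_coe_le (Real.iSup_nonneg fun _ => norm_nonneg _), coe_nnnorm]
  exact le_ciSup hbdd (z, b)

end PartialGradient

section Taylor

variable {E : Type*} [NormedAddCommGroup E] [InnerProductSpace ℝ E] [CompleteSpace E]
  {f : E → ℝ} {K : ℝ≥0}

theorem abs_sub_sub_inner_gradient_le (hf : Differentiable ℝ f)
    (hK : LipschitzWith K (gradient f)) (a b : E) :
    |f a - f b - ⟪gradient f b, a - b⟫| ≤ K * ‖a - b‖ ^ 2 := by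
  have hseg : ∀ u ∈ segment ℝ b a, ‖fderiv ℝ f u - fderiv ℝ f b‖ ≤ K * ‖a - b‖ := by
    intro u hu
    rw [← toDual_gradient, ← toDual_gradient, ← map_sub, LinearIsometryEquiv.norm_map]
    exact (hK.norm_sub_le u b).trans (by gcongr; exact norm_sub_le_of_mem_segment hu)
  have := (convex_segment b a).norm_image_sub_le_of_norm_fderiv_le' (fun u _ => hf u) hseg
    (left_mem_segment ℝ b a) (right_mem_segment ℝ b a)
  rw [← inner_gradient_left, Real.norm_eq_abs] at this
  linarith

theorem abs_add_neg_sub_sub_inner_gradient_le (hf : Differentiable ℝ f)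
    (hK : LipschitzWith K (gradient f)) (a x : E) :
    |f a + f (-a) - f x - f (-x) - ⟪gradient f x - gradient f (-x), a - x⟫|
      ≤ 2 * K * ‖a - x‖ ^ 2 := by
  have h₁ := abs_sub_sub_inner_gradient_le hf hK a x
  have h₂ := abs_sub_sub_inner_gradient_le hf hK (-a) (-x)
  rw [neg_sub_neg, norm_sub_rev] at h₂
  calc _ = |(f a - f x - ⟪gradient f x, a - x⟫)
          + (f (-a) - f (-x) - ⟪gradient f (-x), x - a⟫)| := by
        rw [inner_sub_left, ← neg_sub a x, inner_neg_right]; ring_nf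
    _ ≤ _ := (abs_add_le _ _).trans (by linarith)

theorem abs_inner_gradient_sub_gradient_neg_le (hK : LipschitzWith K (gradient f)) (x : E) :
    |⟪gradient f x - gradient f (-x), x⟫| ≤ 2 * K * ‖x‖ ^ 2 := by
  calc |⟪gradient f x - gradient f (-x), x⟫|
      ≤ ‖gradient f x - gradient f (-x)‖ * ‖x‖ := abs_real_inner_le_norm _ _
    _ ≤ K * ‖x - -x‖ * ‖x‖ := by gcongr; exact hK.norm_sub_le _ _
    _ = 2 * K * ‖x‖ ^ 2 := by
      rw [sub_neg_eq_add, ← two_smul ℝ, norm_smul, Real.norm_two]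
      ring

end Taylor

section Sphere

variable {E : Type*} [NormedAddCommGroup E] [InnerProductSpace ℝ E]

def sphericalPoint (k h i : E) (θ φ : ℝ) : E := cos θ • k + sin θ • (cos φ • h + sin φ • i)

@[fun_prop]
theorem continuous_sphericalPoint (k h i : E) (θ : ℝ) : Continuous (sphericalPoint k h i θ) := by
  unfold sphericalPoint; fun_prop

theorem inner_sphericalPoint (w k h i : E) (θ φ : ℝ) :
    ⟪w, sphericalPoint k h i θ φ⟫
      = cos θ * ⟪w, k⟫ + sin θ * ⟪w, h⟫ * cos φ + sin θ * ⟪w, i⟫ * sin φ := by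
  simp only [sphericalPoint, inner_add_right, real_inner_smul_right]
  ring

theorem norm_sphericalPoint_sub_sq {k h i : E} (hk : ‖k‖ = 1) (hh : ‖h‖ = 1) (hi : ‖i‖ = 1)
    (hkh : ⟪k, h⟫ = 0) (hki : ⟪k, i⟫ = 0) (hhi : ⟪h, i⟫ = 0) (θ φ : ℝ) :
    ‖sphericalPoint k h i θ φ - k‖ ^ 2 = 2 * (1 - cos θ) := by
  have hhk : ⟪h, k⟫ = 0 := by rw [real_inner_comm, hkh]
  have hik : ⟪i, k⟫ = 0 := by rw [real_inner_comm, hki]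
  have hih : ⟪i, h⟫ = 0 := by rw [real_inner_comm, hhi]
  have hkk : ⟪k, k⟫ = 1 := by rw [real_inner_self_eq_norm_sq, hk, one_pow]
  have hhh : ⟪h, h⟫ = 1 := by rw [real_inner_self_eq_norm_sq, hh, one_pow]
  have hii : ⟪i, i⟫ = 1 := by rw [real_inner_self_eq_norm_sq, hi, one_pow]
  rw [← real_inner_self_eq_norm_sq]
  simp only [sphericalPoint, inner_add_left, inner_add_right, inner_sub_left, inner_sub_right,
    real_inner_smul_left, real_inner_smul_right, hkk, hhh, hii, hkh, hki, hhi, hhk, hik, hih]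
  nlinarith [sin_sq_add_cos_sq θ, sin_sq_add_cos_sq φ]

theorem integral_inner_sphericalPoint (w k h i : E) (θ : ℝ) :
    ∫ φ in 0..2 * π, ⟪w, sphericalPoint k h i θ φ⟫ = 2 * π * (cos θ * ⟪w, k⟫) := by
  simp only [inner_sphericalPoint]
  rw [intervalIntegral.integral_add, intervalIntegral.integral_add]
  · simp [integral_cos, integral_sin]
    ring
  all_goals exact Continuous.intervalIntegrable (by fun_prop) _ _

theorem integral_inner_smul_sphericalPoint_sub (w k h i : E) (r θ : ℝ) :
    ∫ φ in 0..2 * π, ⟪w, r • sphericalPoint k h i θ φ - r • k⟫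
      = 2 * π * ((cos θ - 1) * ⟪w, r • k⟫) := by
  simp only [inner_sub_right, real_inner_smul_right]
  rw [intervalIntegral.integral_sub, intervalIntegral.integral_const_mul,
    integral_inner_sphericalPoint, intervalIntegral.integral_const]
  · simp only [sub_zero, smul_eq_mul]; ring
  all_goals exact Continuous.intervalIntegrable (by fun_prop) _ _

end Sphere

section Average

variable {E : Type*} [NormedAddCommGroup E] [InnerProductSpace ℝ E] [CompleteSpace E]

theorem abs_average_sphericalPoint_sub_le {f : E → ℝ} {K : ℝ≥0} (hf : Differentiable ℝ f)
    (hK : LipschitzWith K (gradient f)) {k h i : E} (hk : ‖k‖ = 1) (hh : ‖h‖ = 1) (hi : ‖i‖ = 1)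
    (hkh : ⟪k, h⟫ = 0) (hki : ⟪k, i⟫ = 0) (hhi : ⟪h, i⟫ = 0) (r θ : ℝ) :
    |(1 / (2 * π)) * ∫ φ in 0..2 * π,
        (f (r • sphericalPoint k h i θ φ) + f (-(r • sphericalPoint k h i θ φ))
          - f (r • k) - f (-(r • k)))|
      ≤ 6 * K * r ^ 2 * (1 - cos θ) := by
  set σ := sphericalPoint k h i θ
  set w := gradient f (r • k) - gradient f (-(r • k))
  set F := fun φ => f (r • σ φ) + f (-(r • σ φ)) - f (r • k) - f (-(r • k))
  set ℓ := fun φ => ⟪w, r • σ φ - r • k⟫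
  have hcos : 0 ≤ 1 - cos θ := by linarith [cos_le_one θ]
  have hℓc : Continuous ℓ := by fun_prop
  have hFc : Continuous F := by have := hf.continuous; fun_prop
  have hrem : ∀ φ, |F φ - ℓ φ| ≤ 4 * K * r ^ 2 * (1 - cos θ) := by
    intro φ
    refine (abs_add_neg_sub_sub_inner_gradient_le hf hK (r • σ φ) (r • k)).trans_eq ?_
    rw [← smul_sub, norm_smul, mul_pow, Real.norm_eq_abs, sq_abs,
      norm_sphericalPoint_sub_sq hk hh hi hkh hki hhi]
    ring
  have hw : |⟪w, r • k⟫| ≤ 2 * K * r ^ 2 := by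
    simpa only [norm_smul, hk, mul_one, Real.norm_eq_abs, sq_abs] using
      abs_inner_gradient_sub_gradient_neg_le hK (r • k)
  have hsplit : ∫ φ in 0..2 * π, (F φ - ℓ φ)
      = (∫ φ in 0..2 * π, F φ) - ∫ φ in 0..2 * π, ℓ φ :=
    intervalIntegral.integral_sub (hFc.intervalIntegrable _ _) (hℓc.intervalIntegrable _ _)
  have hremInt : |∫ φ in 0..2 * π, (F φ - ℓ φ)| ≤ 4 * K * r ^ 2 * (1 - cos θ) * (2 * π) := by
    simpa [abs_of_pos two_pi_pos] using
      intervalIntegral.norm_integral_le_of_norm_le_const (a := 0) (b := 2 * π) fun φ _ =>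
        (Real.norm_eq_abs _).trans_le (hrem φ)
  calc |(1 / (2 * π)) * ∫ φ in 0..2 * π, F φ|
      = |(1 / (2 * π)) * (∫ φ in 0..2 * π, (F φ - ℓ φ)) + (cos θ - 1) * ⟪w, r • k⟫| := by
        rw [hsplit, integral_inner_smul_sphericalPoint_sub]; field_simp; ring_nf
    _ ≤ (1 / (2 * π)) * |∫ φ in 0..2 * π, (F φ - ℓ φ)| + (1 - cos θ) * |⟪w, r • k⟫| := by
        refine (abs_add_le _ _).trans_eq ?_
        rw [abs_mul, abs_mul, abs_of_pos (by positivity), abs_sub_comm, abs_of_nonneg hcos]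
    _ ≤ (1 / (2 * π)) * (4 * K * r ^ 2 * (1 - cos θ) * (2 * π))
          + (1 - cos θ) * (2 * K * r ^ 2) := by gcongr
    _ = 6 * K * r ^ 2 * (1 - cos θ) := by field_simp; ring

end Average

theorem averaged_discrete_gradient_estimate_general
    (Ψ : E3 × E3 → ℝ) (hΨ : ContDiff ℝ (⊤ : ℕ∞) Ψ) (hΨc : HasCompactSupport Ψ)
    (x y : E3) (hx : x ≠ 0)
    (k h i : E3) (hk : k = ‖x‖⁻¹ • x)
    (hh : ‖h‖ = 1) (hi : ‖i‖ = 1)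
    (hkh : ⟪k, h⟫ = 0) (hki : ⟪k, i⟫ = 0) (hhi : ⟪h, i⟫ = 0)
    (θ : ℝ)
    (L₂ : ℝ)
    (hL₂ : L₂ = ⨆ q : E3 × E3,
      ‖fderiv ℝ (fun z => gradient (fun w => Ψ (w, q.2)) z) q.1‖) :
    |(1 / (2 * π)) * ∫ φ in (0:ℝ)..(2 * π),
        (Ψ (‖x‖ • (Real.cos θ • k + Real.sin θ • (Real.cos φ • h + Real.sin φ • i)), y)
          + Ψ (-(‖x‖ • (Real.cos θ • k + Real.sin θ • (Real.cos φ • h + Real.sin φ • i))), y)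
          - Ψ (x, y) - Ψ (-x, y))|
      ≤ 2 * L₂ * ‖(2 : ℝ) • x‖ ^ 2 * (1 - Real.cos θ) := by
  have hΨ₂ : ContDiff ℝ 2 Ψ := hΨ.of_le (WithTop.coe_le_coe.mpr le_top)
  have hf : Differentiable ℝ fun w => Ψ (w, y) :=
    (hΨ₂.differentiable two_ne_zero).comp (differentiable_id.prodMk (differentiable_const y))
  have hK := lipschitzWith_gradient_partial hΨ₂ hΨc y
  rw [← hL₂] at hK
  have hL₂₀ : 0 ≤ L₂ := hL₂ ▸ Real.iSup_nonneg fun _ => norm_nonneg _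
  have hx₀ : ‖x‖ ≠ 0 := norm_ne_zero_iff.mpr hx
  have hxk : ‖x‖ • k = x := by rw [hk, smul_smul, mul_inv_cancel₀ hx₀, one_smul]
  have hk₁ : ‖k‖ = 1 := by rw [hk, norm_smul, norm_inv, norm_norm, inv_mul_cancel₀ hx₀]
  have hbound := abs_average_sphericalPoint_sub_le hf hK hk₁ hh hi hkh hki hhi ‖x‖ θ
  rw [hxk, Real.coe_toNNReal _ hL₂₀] at hbound
  refine hbound.trans ?_
  have hnonneg : 0 ≤ L₂ * ‖x‖ ^ 2 * (1 - cos θ) :=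
    mul_nonneg (mul_nonneg hL₂₀ (sq_nonneg _)) (sub_nonneg.mpr (cos_le_one θ))
  rw [norm_smul, Real.norm_two]
  nlinarith [hnonneg]

/-- Averaged second-order estimate for the discrete gradient: averaging over the circle of
unit vectors `p(φ) = cos φ·h + sin φ·i` orthogonal to `k = x/|x|` upgrades the estimate to
second order in `|σ − k|`, since `|σ(φ) − k|² = 2(1 − cos θ)`. -/
theorem averaged_discrete_gradient_estimate
    (Ψ : E3 × E3 → ℝ) (hΨ : ContDiff ℝ (⊤ : ℕ∞) Ψ) (hΨc : HasCompactSupport Ψ)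
    (x y : E3) (hx : x ≠ 0)
    (k h i : E3) (hk : k = ‖x‖⁻¹ • x)
    (hh : ‖h‖ = 1) (hi : ‖i‖ = 1)
    (hkh : ⟪k, h⟫ = 0) (hki : ⟪k, i⟫ = 0) (hhi : ⟪h, i⟫ = 0)
    (θ : ℝ) (hθ : θ ∈ Set.Icc 0 (π / 2))
    (L₂ : ℝ)
    (hL₂ : L₂ = ⨆ q : E3 × E3,
      ‖fderiv ℝ (fun z => gradient (fun w => Ψ (w, q.2)) z) q.1‖) :
    |(1 / (2 * π)) * ∫ φ in (0:ℝ)..(2 * π),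
        (Ψ (‖x‖ • (Real.cos θ • k + Real.sin θ • (Real.cos φ • h + Real.sin φ • i)), y)
          + Ψ (-(‖x‖ • (Real.cos θ • k + Real.sin θ • (Real.cos φ • h + Real.sin φ • i))), y)
          - Ψ (x, y) - Ψ (-x, y))|
      ≤ 2 * L₂ * ‖(2 : ℝ) • x‖ ^ 2 * (1 - Real.cos θ) :=
  averaged_discrete_gradient_estimate_general Ψ hΨ hΨc x y hx k h i hk hh hi hkh hki hhi θ L₂ hL₂
end
end

section
/- Let ψ ∈ C_c^∞(ℝ³; ℝ), let v, v∗ ∈ ℝ³ with v ≠ v∗, set k = (v − v∗)/|v − v∗|, let (k, h, i) be an orthonormal basis of ℝ³, and fix χ ∈ (0, π/2]. For ε > 0 and φ ∈ [0, 2π] set θ_ε = εχ/π, p(φ) = cos φ · h + sin φ · i, σ_ε(φ) = cos θ_ε · k + sin θ_ε · p(φ), and let v′_{ε,φ}, v∗′_{ε,φ} be the corresponding post-collision velocities. Then lim_{ε↓0} (1/(ε²χ²)) ∫₀^{2π} [ψ(v′_{ε,φ}) + ψ(v∗′_{ε,φ}) − ψ(v) − ψ(v∗)] dφ = (1/8π)[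 |v−v∗|² Π[v−v∗] : (D²ψ(v) + D²ψ(v∗)) − 4 (v−v∗) · (∇ψ(v) − ∇ψ(v∗)) ], where A : B = trace(AᵀB) and D²ψ denotes the Hessian. -/
noncomputable section
open Real MeasureTheory Filter Topology
open scoped RealInnerProductSpace

/-- Post-collision velocity `v' = (v+v∗)/2 + (|v−v∗|/2)σ`. -/
def vPost (v w σ : E3) : E3 := ((2 : ℝ)⁻¹) • (v + w) + (‖v - w‖ / 2) • σ

/-- Post-collision velocity `v∗' = (v+v∗)/2 − (|v−v∗|/2)σ`. -/
def vPostStar (v w σ : E3) : E3 := ((2 : ℝ)⁻¹) • (v + w) - (‖v - w‖ / 2) • σ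

/-- Collision direction `σ(θ,φ) = cos θ·k + sin θ·(cos φ·h + sin φ·i)`. -/
def sigmaDir (k h i : E3) (θ φ : ℝ) : E3 :=
  Real.cos θ • k + Real.sin θ • (Real.cos φ • h + Real.sin φ • i)

/-!
Write `θ = εχ/π`, `m = (v + v∗)/2`, `r = |v − v∗|/2` and `p(φ) = cos φ·h + sin φ·i`, so that the
integrand is `F(θ, φ) = ψ(m + rσ) + ψ(m − rσ) − ψ(v) − ψ(v∗)` with `σ = cos θ·k + sin θ·p(φ)`.
Then `F(0, ·) = 0` and `∂_θF(0, φ) = r (Dψ(v) − Dψ(v∗)) p(φ)` is linear in `p(φ)`, so its average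
over the circle vanishes. Two mean value estimates bound `θ⁻² (F(θ, φ) − θ ∂_θF(0, φ))`
uniformly, and l'Hôpital's rule gives its pointwise limit `∂²_θF(0, φ)/2`; dominated convergence
therefore yields
`θ⁻² ∫ F(θ, φ) dφ → ½ ∫ ∂²_θF(0, φ) dφ`. Since
`∂²_θF(0, φ) = r² (D²ψ(v) + D²ψ(v∗))[p, p] − r (Dψ(v) − Dψ(v∗)) k`, the circle average only sees
the Hessians in the directions `h`, `i` orthogonal to `v − v∗`, which is the pairing with
`Π[v − v∗]`.
-/

theorem abs_sub_sub_mul_le_mul_sq {f f₁ f₂ : ℝ → ℝ} {θ C : ℝ} (hθ : 0 ≤ θ)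
    (hf : ∀ t ∈ Set.Icc 0 θ, HasDerivAt f (f₁ t) t)
    (hf₁ : ∀ t ∈ Set.Icc 0 θ, HasDerivAt f₁ (f₂ t) t)
    (hC : ∀ t ∈ Set.Icc 0 θ, |f₂ t| ≤ C) :
    |f θ - f 0 - θ * f₁ 0| ≤ C * θ ^ 2 := by
  have h0 : (0 : ℝ) ∈ Set.Icc 0 θ := Set.left_mem_Icc.2 hθ
  have hf₁_sub : ∀ t ∈ Set.Icc 0 θ, ‖f₁ t - f₁ 0‖ ≤ C * θ := by
    intro t ht
    have := (convex_Icc 0 θ).norm_image_sub_le_of_norm_hasDerivWithin_le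
      (fun x hx => (hf₁ x hx).hasDerivWithinAt) (fun x hx => hC x hx) h0 ht
    rw [sub_zero, Real.norm_of_nonneg ht.1] at this
    exact this.trans (mul_le_mul_of_nonneg_left ht.2 ((abs_nonneg _).trans (hC 0 h0)))
  have := (convex_Icc 0 θ).norm_image_sub_le_of_norm_hasDerivWithin_le
    (f := fun t => f t - t * f₁ 0) (f' := fun t => f₁ t - f₁ 0)
    (fun t ht => ((hf t ht).sub (hasDerivAt_mul_const _)).hasDerivWithinAt) hf₁_sub h0
    (Set.right_mem_Icc.2 hθ)
  rw [sub_zero, Real.norm_of_nonneg hθ, zero_mul, sub_zero, sub_right_comm] at this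
  rwa [sq, ← mul_assoc]

theorem tendsto_sub_sub_mul_div_sq {f f₁ : ℝ → ℝ} {f₂ : ℝ}
    (hf : ∀ t, HasDerivAt f (f₁ t) t) (hf₁ : HasDerivAt f₁ f₂ 0) :
    Tendsto (fun θ => (f θ - f 0 - θ * f₁ 0) / θ ^ 2) (𝓝[>] 0) (𝓝 (f₂ / 2)) := by
  have hnum : ∀ t, HasDerivAt (fun θ => f θ - f 0 - θ * f₁ 0) (f₁ t - f₁ 0) t := fun t =>
    ((hf t).sub_const _).sub (hasDerivAt_mul_const _)
  have hslope : Tendsto (fun t => (f₁ t - f₁ 0) / (2 * t)) (𝓝[>] 0) (𝓝 (f₂ / 2)) := by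
    refine ((hasDerivAt_iff_tendsto_slope.1 hf₁).mono_left
      (nhdsGT_le_nhdsNE 0)).div_const 2 |>.congr fun t => ?_
    rw [slope_def_field]
    ring
  refine HasDerivAt.lhopital_zero_nhdsGT (Eventually.of_forall hnum)
    (Eventually.of_forall fun t => by simpa [mul_comm] using hasDerivAt_pow 2 t)
    (eventually_nhdsWithin_of_forall fun t ht => mul_ne_zero two_ne_zero (ne_of_gt ht))
    ?_ ?_ hslope
  · simpa using (hnum 0).continuousAt.tendsto.mono_left nhdsWithin_le_nhds
  · simpa using ((continuous_pow 2).tendsto (0 : ℝ)).mono_left nhdsWithin_le_nhds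

theorem tendsto_inv_sq_mul_intervalIntegral_sub {f f₁ f₂ : ℝ → ℝ → ℝ} (a b : ℝ)
    (hf : ∀ θ φ, HasDerivAt (f · φ) (f₁ θ φ) θ)
    (hf₁ : ∀ θ φ, HasDerivAt (f₁ · φ) (f₂ θ φ) θ)
    (hf_cont : ∀ θ, Continuous (f θ)) (hf₁_cont : Continuous (f₁ 0))
    (hf₂_cont : Continuous (Function.uncurry f₂))
    (hf₁_int : ∫ φ in a..b, f₁ 0 φ = 0) :
    Tendsto (fun θ => (θ ^ 2)⁻¹ * ∫ φ in a..b, (f θ φ - f 0 φ)) (𝓝[>] 0)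
      (𝓝 ((∫ φ in a..b, f₂ 0 φ) / 2)) := by
  set G : ℝ → ℝ → ℝ := fun θ φ => (f θ φ - f 0 φ - θ * f₁ 0 φ) / θ ^ 2
  obtain ⟨C, hC⟩ := (isCompact_Icc.prod isCompact_uIcc).exists_bound_of_continuousOn
    (hf₂_cont.continuousOn (s := Set.Icc (0 : ℝ) 1 ×ˢ Set.uIcc a b))
  have hG_bound : ∀ θ ∈ Set.Ioo (0 : ℝ) 1, ∀ φ ∈ Set.uIcc a b, ‖G θ φ‖ ≤ C := by
    intro θ hθ φ hφ
    have hθ2 : 0 < θ ^ 2 := pow_pos hθ.1 2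
    rw [Real.norm_eq_abs, abs_div, abs_of_pos hθ2, div_le_iff₀ hθ2]
    refine abs_sub_sub_mul_le_mul_sq hθ.1.le (fun t _ => hf t φ) (fun t _ => hf₁ t φ)
      fun t ht => hC (t, φ) ⟨⟨ht.1, ht.2.trans hθ.2.le⟩, hφ⟩
  have hG_lim : Tendsto (fun θ => ∫ φ in a..b, G θ φ) (𝓝[>] 0)
      (𝓝 (∫ φ in a..b, f₂ 0 φ / 2)) := by
    refine intervalIntegral.tendsto_integral_filter_of_dominated_convergence (fun _ => C)
      (Eventually.of_forall fun θ => ?_) ?_ intervalIntegrable_const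
      (Eventually.of_forall fun φ _ =>
        tendsto_sub_sub_mul_div_sq (fun t => hf t φ) (hf₁ 0 φ))
    · exact ((((hf_cont θ).sub (hf_cont 0)).sub
        (continuous_const.mul hf₁_cont)).div_const _).aestronglyMeasurable
    · filter_upwards [Ioo_mem_nhdsGT one_pos] with θ hθ
      exact Eventually.of_forall fun φ hφ => hG_bound θ hθ φ (Set.uIoc_subset_uIcc hφ)
  rw [← intervalIntegral.integral_div]
  refine hG_lim.congr' (eventually_nhdsWithin_of_forall fun θ _ => ?_)
  have hint : IntervalIntegrable (fun φ => f θ φ - f 0 φ) volume a b :=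
    ((hf_cont θ).sub (hf_cont 0)).intervalIntegrable a b
  simp only [G, div_eq_inv_mul]
  rw [intervalIntegral.integral_const_mul, intervalIntegral.integral_sub hint
    ((hf₁_cont.const_mul θ).intervalIntegrable a b), intervalIntegral.integral_const_mul, hf₁_int,
    mul_zero, sub_zero]

section GreatCircle

variable {E : Type*} [NormedAddCommGroup E] [NormedSpace ℝ E]

def greatCircle (k p : E) (t : ℝ) : E := Real.cos t • k + Real.sin t • p

@[simp]
theorem greatCircle_zero (k p : E) : greatCircle k p 0 = k := by
  simp [greatCircle]

theorem greatCircle_neg_neg (k p : E) (t : ℝ) :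
    greatCircle (-k) (-p) t = -greatCircle k p t := by
  simp only [greatCircle, smul_neg, neg_add]

theorem hasDerivAt_greatCircle (k p : E) (t : ℝ) :
    HasDerivAt (greatCircle k p) (greatCircle p (-k) t) t := by
  have hval : greatCircle p (-k) t = -Real.sin t • k + Real.cos t • p := by
    rw [greatCircle, smul_neg, neg_smul, add_comm]
  rw [hval]
  exact ((Real.hasDerivAt_cos t).smul_const k).add ((Real.hasDerivAt_sin t).smul_const p)

@[fun_prop]
theorem continuous_greatCircle {X : Type*} [TopologicalSpace X] {k p : X → E} {t : X → ℝ}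
    (hk : Continuous k) (hp : Continuous p) (ht : Continuous t) :
    Continuous fun x => greatCircle (k x) (p x) (t x) := by
  unfold greatCircle
  fun_prop

theorem integral_clm_greatCircle (L : E →L[ℝ] ℝ) (k p : E) :
    ∫ t in (0 : ℝ)..(2 * π), L (greatCircle k p t) = 0 := by
  simp only [greatCircle, map_add, map_smul, smul_eq_mul]
  rw [intervalIntegral.integral_add (Continuous.intervalIntegrable (by fun_prop) _ _)
      (Continuous.intervalIntegrable (by fun_prop) _ _),
    intervalIntegral.integral_mul_const, intervalIntegral.integral_mul_const, integral_cos,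
    integral_sin]
  simp

theorem integral_bilin_greatCircle (B : E →L[ℝ] E →L[ℝ] ℝ) (k p : E) :
    ∫ t in (0 : ℝ)..(2 * π), B (greatCircle k p t) (greatCircle k p t) = π * (B k k + B p p) := by
  have hexpand : ∀ t, B (greatCircle k p t) (greatCircle k p t) =
      Real.cos t ^ 2 * B k k + Real.sin t * Real.cos t * (B k p + B p k)
        + Real.sin t ^ 2 * B p p := by
    intro t
    simp only [greatCircle, map_add, map_smul, add_apply, smul_apply, smul_eq_mul]
    ring
  simp_rw [hexpand]
  rw [intervalIntegral.integral_add (Continuous.intervalIntegrable (by fun_prop) _ _)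
      (Continuous.intervalIntegrable (by fun_prop) _ _),
    intervalIntegral.integral_add (Continuous.intervalIntegrable (by fun_prop) _ _)
      (Continuous.intervalIntegrable (by fun_prop) _ _),
    intervalIntegral.integral_mul_const, intervalIntegral.integral_mul_const,
    intervalIntegral.integral_mul_const, integral_cos_sq, integral_sin_mul_cos₁, integral_sin_sq]
  simp only [cos_two_pi, sin_two_pi, cos_zero, sin_zero]
  ring

section Comp

variable {F : Type*} [NormedAddCommGroup F] [NormedSpace ℝ F] {ψ : E → F} (a k p : E) (r : ℝ)

theorem hasDerivAt_comp_add_smul_greatCircle (hψ : Differentiable ℝ ψ) (t : ℝ) :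
    HasDerivAt (fun t => ψ (a + r • greatCircle k p t))
      (fderiv ℝ ψ (a + r • greatCircle k p t) (r • greatCircle p (-k) t)) t :=
  (hψ _).hasFDerivAt.comp_hasDerivAt t (((hasDerivAt_greatCircle k p t).const_smul r).const_add a)

theorem hasDerivAt_fderiv_comp_add_smul_greatCircle (hψ : ContDiff ℝ 2 ψ) (t : ℝ) :
    HasDerivAt (fun t => fderiv ℝ ψ (a + r • greatCircle k p t) (r • greatCircle p (-k) t))
      (fderiv ℝ (fderiv ℝ ψ) (a + r • greatCircle k p t) (r • greatCircle p (-k) t)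
          (r • greatCircle p (-k) t)
        - fderiv ℝ ψ (a + r • greatCircle k p t) (r • greatCircle k p t)) t := by
  have hψ' : Differentiable ℝ (fderiv ℝ ψ) :=
    (hψ.fderiv_right (m := 1) le_rfl).differentiable one_ne_zero
  have hdir := (hasDerivAt_greatCircle p (-k) t).const_smul r
  rw [greatCircle_neg_neg, smul_neg] at hdir
  rw [sub_eq_add_neg, ← map_neg]
  exact (hasDerivAt_comp_add_smul_greatCircle a k p r hψ' t).clm_apply hdir

end Comp

theorem tendsto_inv_sq_mul_integral_greatCircle {ψ : E → ℝ} (hψ : ContDiff ℝ 2 ψ)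
    (a k h i : E) (r : ℝ) :
    Tendsto (fun θ => (θ ^ 2)⁻¹ * ∫ φ in (0 : ℝ)..(2 * π),
        (ψ (a + r • greatCircle k (greatCircle h i φ) θ)
          + ψ (a - r • greatCircle k (greatCircle h i φ) θ) - ψ (a + r • k) - ψ (a - r • k)))
      (𝓝[>] 0)
      (𝓝 (π / 2 * r ^ 2 *
          ((fderiv ℝ (fderiv ℝ ψ) (a + r • k) + fderiv ℝ (fderiv ℝ ψ) (a - r • k)) h h
            + (fderiv ℝ (fderiv ℝ ψ) (a + r • k) + fderiv ℝ (fderiv ℝ ψ) (a - r • k)) i i)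
        - π * r * (fderiv ℝ ψ (a + r • k) k - fderiv ℝ ψ (a - r • k) k))) := by
  have hψ₁ : ContDiff ℝ 1 (fderiv ℝ ψ) := hψ.fderiv_right le_rfl
  have hψ₂ : Continuous (fderiv ℝ (fderiv ℝ ψ)) := hψ₁.continuous_fderiv one_ne_zero
  have hψ₁c : Continuous (fderiv ℝ ψ) := hψ₁.continuous
  let x (s θ φ : ℝ) : E := a + s • greatCircle k (greatCircle h i φ) θ
  let u (s θ φ : ℝ) : E := s • greatCircle (greatCircle h i φ) (-k) θ
  let g (s θ φ : ℝ) : ℝ := ψ (x s θ φ)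
  let g₁ (s θ φ : ℝ) : ℝ := fderiv ℝ ψ (x s θ φ) (u s θ φ)
  let g₂ (s θ φ : ℝ) : ℝ := fderiv ℝ (fderiv ℝ ψ) (x s θ φ) (u s θ φ) (u s θ φ)
    - fderiv ℝ ψ (x s θ φ) (s • greatCircle k (greatCircle h i φ) θ)
  have hx0 : ∀ s φ, x s 0 φ = a + s • k := fun s φ => by simp [x]
  have hneg : ∀ y : E, a + (-r) • y = a - r • y := fun y => by rw [neg_smul, ← sub_eq_add_neg]
  have hf₁0 : ∀ φ, g₁ r 0 φ + g₁ (-r) 0 φ =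
      (r • (fderiv ℝ ψ (a + r • k) - fderiv ℝ ψ (a - r • k))) (greatCircle h i φ) := by
    intro φ
    simp only [g₁, hx0, u, greatCircle_zero, hneg, map_smul, smul_apply, sub_apply, smul_eq_mul]
    ring
  have hf₂0 : ∀ φ, g₂ r 0 φ + g₂ (-r) 0 φ =
      (r ^ 2 • (fderiv ℝ (fderiv ℝ ψ) (a + r • k) + fderiv ℝ (fderiv ℝ ψ) (a - r • k)))
          (greatCircle h i φ) (greatCircle h i φ)
        - r * (fderiv ℝ ψ (a + r • k) k - fderiv ℝ ψ (a - r • k) k) := by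
    intro φ
    simp only [g₂, hx0, u, greatCircle_zero, hneg, map_smul, smul_apply, add_apply, smul_eq_mul]
    ring
  have key := tendsto_inv_sq_mul_intervalIntegral_sub (f := fun θ φ => g r θ φ + g (-r) θ φ)
    (f₁ := fun θ φ => g₁ r θ φ + g₁ (-r) θ φ) (f₂ := fun θ φ => g₂ r θ φ + g₂ (-r) θ φ) 0 (2 * π)
    (fun θ φ => (hasDerivAt_comp_add_smul_greatCircle _ _ _ _ (hψ.differentiable two_ne_zero) θ).add
      (hasDerivAt_comp_add_smul_greatCircle _ _ _ _ (hψ.differentiable two_ne_zero) θ))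
    (fun θ φ => (hasDerivAt_fderiv_comp_add_smul_greatCircle _ _ _ _ hψ θ).add
      (hasDerivAt_fderiv_comp_add_smul_greatCircle _ _ _ _ hψ θ))
    (fun θ => by fun_prop) (by fun_prop) (by fun_prop)
    (by rw [intervalIntegral.integral_congr fun φ _ => hf₁0 φ, integral_clm_greatCircle])
  convert key using 2 with θ
  · congr 1
    refine intervalIntegral.integral_congr fun φ _ => ?_
    simp only [g, hx0, x, hneg]
    ring
  · rw [intervalIntegral.integral_congr fun φ _ => hf₂0 φ, intervalIntegral.integral_sub
      (Continuous.intervalIntegrable (by fun_prop) _ _) intervalIntegrable_const,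
      integral_bilin_greatCircle]
    simp only [smul_apply, smul_eq_mul, intervalIntegral.integral_const]
    ring

end GreatCircle

section InnerProduct

variable {E : Type*} [NormedAddCommGroup E] [InnerProductSpace ℝ E]

theorem inner_fderiv_gradient_apply [CompleteSpace E] (ψ : E → ℝ) (z x y : E) :
    ⟪x, fderiv ℝ (gradient ψ) z y⟫ = fderiv ℝ (fderiv ℝ ψ) z y x := by
  have hgrad : gradient ψ = (InnerProductSpace.toDual ℝ E).symm ∘ fderiv ℝ ψ := rfl
  rw [hgrad, LinearIsometryEquiv.comp_fderiv, real_inner_comm]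
  exact InnerProductSpace.toDual_symm_apply

theorem orthonormal_vecCons_three {k h i : E} (hk : ‖k‖ = 1) (hh : ‖h‖ = 1) (hi : ‖i‖ = 1)
    (hkh : ⟪k, h⟫ = 0) (hki : ⟪k, i⟫ = 0) (hhi : ⟪h, i⟫ = 0) : Orthonormal ℝ ![k, h, i] := by
  rw [orthonormal_iff_ite]
  intro a b
  fin_cases a <;> fin_cases b <;>
    simp [real_inner_comm, hk, hh, hi, hkh, hki, hhi]

theorem trace_sub_inv_norm_sq_mul_inner (hE : Module.finrank ℝ E = 3) {u h i : E}
    (hb : Orthonormal ℝ ![‖u‖⁻¹ • u, h, i]) (T : E →L[ℝ] E) :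
    LinearMap.trace ℝ E (T : E →ₗ[ℝ] E) - (‖u‖ ^ 2)⁻¹ * ⟪u, T u⟫ = ⟪h, T h⟫ + ⟪i, T i⟫ := by
  have hu : u ≠ 0 := fun hu => hb.ne_zero 0 (by simp [hu])
  let b := (basisOfOrthonormalOfCardEqFinrank hb (by simp [hE])).toOrthonormalBasis
    (by rwa [coe_basisOfOrthonormalOfCardEqFinrank])
  have hb_coe : ⇑b = ![‖u‖⁻¹ • u, h, i] := by simp [b]
  rw [LinearMap.trace_eq_sum_inner _ b, Fin.sum_univ_three, hb_coe]
  simp only [Matrix.cons_val, ContinuousLinearMap.coe_coe, map_smul, real_inner_smul_left,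
    real_inner_smul_right]
  have hu' : ‖u‖ ≠ 0 := norm_ne_zero_iff.2 hu
  field_simp
  ring

end InnerProduct

theorem vPost_normalize {v w : E3} (hvw : v ≠ w) : vPost v w (‖v - w‖⁻¹ • (v - w)) = v := by
  have hR : ‖v - w‖ ≠ 0 := norm_ne_zero_iff.2 (sub_ne_zero.2 hvw)
  rw [vPost, smul_smul, show ‖v - w‖ / 2 * ‖v - w‖⁻¹ = 2⁻¹ by field_simp]
  module

theorem vPostStar_normalize {v w : E3} (hvw : v ≠ w) :
    vPostStar v w (‖v - w‖⁻¹ • (v - w)) = w := by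
  have hR : ‖v - w‖ ≠ 0 := norm_ne_zero_iff.2 (sub_ne_zero.2 hvw)
  rw [vPostStar, smul_smul, show ‖v - w‖ / 2 * ‖v - w‖⁻¹ = 2⁻¹ by field_simp]
  module

theorem discrete_gradient_circle_average_grazing_limit_general
    (ψ : E3 → ℝ) (hψ : ContDiff ℝ (⊤ : ℕ∞) ψ)
    (v w : E3) (hvw : v ≠ w)
    (k h i : E3) (hk : k = ‖v - w‖⁻¹ • (v - w))
    (hh : ‖h‖ = 1) (hi : ‖i‖ = 1)
    (hkh : ⟪k, h⟫ = 0) (hki : ⟪k, i⟫ = 0) (hhi : ⟪h, i⟫ = 0)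
    (χ : ℝ) (hχ : χ ∈ Set.Ioc 0 (π / 2)) :
    Filter.Tendsto (fun ε : ℝ =>
        (ε ^ 2 * χ ^ 2)⁻¹ * ∫ φ in (0:ℝ)..(2 * π),
          (ψ (vPost v w (sigmaDir k h i (ε * χ / π) φ))
            + ψ (vPostStar v w (sigmaDir k h i (ε * χ / π) φ)) - ψ v - ψ w))
      (𝓝[>] (0 : ℝ))
      (𝓝 ((1 / (8 * π)) *
        (‖v - w‖ ^ 2 *
            (LinearMap.trace ℝ E3
                ((fderiv ℝ (gradient ψ) v + fderiv ℝ (gradient ψ) w : E3 →L[ℝ] E3) :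
                  E3 →ₗ[ℝ] E3)
              - (‖v - w‖ ^ 2)⁻¹ *
                  ⟪v - w, (fderiv ℝ (gradient ψ) v + fderiv ℝ (gradient ψ) w) (v - w)⟫)
          - 4 * ⟪v - w, gradient ψ v - gradient ψ w⟫))) := by
  have hvw' : v - w ≠ 0 := sub_ne_zero.2 hvw
  have hvw_k : v - w = ‖v - w‖ • k := by
    rw [hk, smul_smul, mul_inv_cancel₀ (norm_ne_zero_iff.2 hvw'), one_smul]
  have hv : vPost v w k = v := hk ▸ vPost_normalize hvw
  have hw : vPostStar v w k = w := hk ▸ vPostStar_normalize hvw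
  rw [vPost] at hv
  rw [vPostStar] at hw
  have hlim := tendsto_inv_sq_mul_integral_greatCircle (hψ.of_le (WithTop.coe_le_coe.2 le_top))
    ((2⁻¹ : ℝ) • (v + w)) k h i (‖v - w‖ / 2)
  rw [hv, hw] at hlim
  have hθ : Tendsto (χ / π * ·) (𝓝[>] 0) (𝓝[>] 0) :=
    tendsto_comap.mono_left (comap_mulLeft_nhdsGT_zero (div_pos hχ.1 pi_pos)).ge
  convert (hlim.comp hθ).const_mul (π ^ 2)⁻¹ using 2 with ε
  · simp only [Function.comp_apply, vPost, vPostStar, sigmaDir, greatCircle]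
    field_simp
  · have horth : Orthonormal ℝ ![k, h, i] := orthonormal_vecCons_three
      (hk ▸ norm_smul_inv_norm hvw') hh hi hkh hki hhi
    have hDψ : ∀ z, fderiv ℝ ψ z (v - w) = ‖v - w‖ * fderiv ℝ ψ z k := fun z => by
      conv_lhs => rw [hvw_k]
      rw [map_smul, smul_eq_mul]
    rw [trace_sub_inv_norm_sq_mul_inner finrank_euclideanSpace_fin (hk ▸ horth)]
    simp only [add_apply, inner_add_right, inner_fderiv_gradient_apply, inner_sub_right,
      inner_gradient_right, conj_trivial, hDψ]
    field_simp
    ring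

/-- Second-order behaviour of the circle average of the discrete gradient in the grazing
regime: `(1/(ε²χ²)) ∫₀^{2π} ∇̄ψ dφ` converges, as `ε ↓ 0`, to
`(1/8π)[|v−v∗|² Π[v−v∗] : (D²ψ(v) + D²ψ(v∗)) − 4(v−v∗)·(∇ψ(v) − ∇ψ(v∗))]`,
where `Π[z] : A = tr A − |z|⁻²⟨z, A z⟩` is the Frobenius pairing with the projection
onto `{z}^⊥`. -/
theorem discrete_gradient_circle_average_grazing_limit
    (ψ : E3 → ℝ) (hψ : ContDiff ℝ (⊤ : ℕ∞) ψ) (hψc : HasCompactSupport ψ)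
    (v w : E3) (hvw : v ≠ w)
    (k h i : E3) (hk : k = ‖v - w‖⁻¹ • (v - w))
    (hh : ‖h‖ = 1) (hi : ‖i‖ = 1)
    (hkh : ⟪k, h⟫ = 0) (hki : ⟪k, i⟫ = 0) (hhi : ⟪h, i⟫ = 0)
    (χ : ℝ) (hχ : χ ∈ Set.Ioc 0 (π / 2)) :
    Filter.Tendsto (fun ε : ℝ =>
        (ε ^ 2 * χ ^ 2)⁻¹ * ∫ φ in (0:ℝ)..(2 * π),
          (ψ (vPost v w (sigmaDir k h i (ε * χ / π) φ))
            + ψ (vPostStar v w (sigmaDir k h i (ε * χ / π) φ)) - ψ v - ψ w))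
      (𝓝[>] (0 : ℝ))
      (𝓝 ((1 / (8 * π)) *
        (‖v - w‖ ^ 2 *
            (LinearMap.trace ℝ E3
                ((fderiv ℝ (gradient ψ) v + fderiv ℝ (gradient ψ) w : E3 →L[ℝ] E3) :
                  E3 →ₗ[ℝ] E3)
              - (‖v - w‖ ^ 2)⁻¹ *
                  ⟪v - w, (fderiv ℝ (gradient ψ) v + fderiv ℝ (gradient ψ) w) (v - w)⟫)
          - 4 * ⟪v - w, gradient ψ v - gradient ψ w⟫))) :=
  discrete_gradient_circle_average_grazing_limit_general ψ hψ v w hvw k h i hk hh hi hkh hki hhi χ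
    hχ
end
end

section
/- Let V ∈ L²(ℝ³ × ℝ³; ℝ³) satisfy V(v, v∗) = −V(v∗, v) for almost every (v, v∗). Then for every η > 0 there exists W ∈ C_c^∞(ℝ³ × ℝ³; ℝ³) such that W(v, v∗) = −W(v∗, v) for all (v, v∗), there exists δ > 0 with W(v, v∗) = 0 whenever |v − v∗| ≤ δ, and ‖V − W‖_{L²(ℝ⁶)} < η. -/
noncomputable section
open MeasureTheory
open scoped ENNReal

/-!
Approximate `V` in `L²` by a smooth compactly supported `W₀` (density of test functions), then
replace `W₀` by its antisymmetrization `½ (W₀ - W₀ ∘ swap)`: since `V` is antisymmetric and the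
swap preserves Lebesgue measure, this does not increase the distance to `V`. Finally multiply by
`1 - φ (v - v∗)` for a bump function `φ` of small radius. This kills a neighbourhood of the
diagonal, keeps smoothness, compact support and antisymmetry, and costs little in `L²` by
dominated convergence, because the diagonal is a Lebesgue null set.
-/

open Filter Topology

section DominatedConvergence

variable {α ι F G : Type*} [MeasurableSpace α] {μ : Measure α} [NormedAddCommGroup F]
  [NormedAddCommGroup G] {p : ℝ≥0∞} {l : Filter ι} [l.IsCountablyGenerated]

theorem tendsto_eLpNorm_zero_of_dominated (hp : p ≠ ∞) {f : ι → α → F} {g : α → G}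
    (hf : ∀ᶠ i in l, AEStronglyMeasurable (f i) μ) (hg : MemLp g p μ)
    (hbound : ∀ᶠ i in l, ∀ᵐ x ∂μ, ‖f i x‖ ≤ ‖g x‖)
    (hlim : ∀ᵐ x ∂μ, Tendsto (fun i => f i x) l (𝓝 0)) :
    Tendsto (fun i => eLpNorm (f i) p μ) l (𝓝 0) := by
  rcases eq_or_ne p 0 with rfl | hp0
  · simpa using tendsto_const_nhds
  have hp_pos : 0 < p.toReal := ENNReal.toReal_pos hp0 hp
  simp_rw [eLpNorm_eq_lintegral_rpow_enorm_toReal hp0 hp]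
  have hint : Tendsto (fun i => ∫⁻ x, ‖f i x‖ₑ ^ p.toReal ∂μ) l (𝓝 0) := by
    simpa [ENNReal.zero_rpow_of_pos hp_pos] using
      tendsto_lintegral_filter_of_dominated_convergence' (fun x => ‖g x‖ₑ ^ p.toReal)
        (hf.mono fun i hfi => hfi.enorm.pow_const _)
        (hbound.mono fun i hi => hi.mono fun x hx =>
          ENNReal.rpow_le_rpow (enorm_le_iff_norm_le.2 hx) hp_pos.le)
        (lintegral_rpow_enorm_lt_top_of_eLpNorm_lt_top hp0 hp hg.eLpNorm_lt_top).ne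
        (hlim.mono fun x hx =>
          (ENNReal.continuous_rpow_const.tendsto _).comp (continuous_enorm.tendsto _ |>.comp hx))
  have := (ENNReal.continuous_rpow_const (y := 1 / p.toReal)).tendsto 0 |>.comp hint
  rwa [ENNReal.zero_rpow_of_pos (one_div_pos.2 hp_pos)] at this

end DominatedConvergence

section Antisymmetrize

variable {α F : Type*} [NormedAddCommGroup F] [NormedSpace ℝ F]

def antisymmetrize (W : α × α → F) (q : α × α) : F :=
  (2⁻¹ : ℝ) • (W q - W q.swap)

theorem antisymmetrize_swap (W : α × α → F) (q : α × α) :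
    antisymmetrize W q.swap = -antisymmetrize W q := by
  simp only [antisymmetrize, Prod.swap_swap, ← smul_neg, neg_sub]

theorem ContDiff.antisymmetrize [NormedAddCommGroup α] [NormedSpace ℝ α] {n : WithTop ℕ∞}
    {W : α × α → F} (hW : ContDiff ℝ n W) : ContDiff ℝ n (antisymmetrize W) :=
  (hW.sub (hW.comp (contDiff_snd.prodMk contDiff_fst))).const_smul _

theorem HasCompactSupport.antisymmetrize [TopologicalSpace α] {W : α × α → F}
    (hW : HasCompactSupport W) : HasCompactSupport (antisymmetrize W) :=
  (hW.sub (hW.comp_homeomorph (Homeomorph.prodComm α α))).smul_left (f := fun _ => (2⁻¹ : ℝ))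

theorem eLpNorm_sub_antisymmetrize_le [MeasurableSpace α] {μ : Measure α} [SFinite μ]
    {p : ℝ≥0∞} (hp : 1 ≤ p) {V W : α × α → F} (hV : AEStronglyMeasurable V (μ.prod μ))
    (hW : AEStronglyMeasurable W (μ.prod μ)) (hanti : ∀ᵐ q ∂μ.prod μ, V q = -V q.swap) :
    eLpNorm (V - antisymmetrize W) p (μ.prod μ) ≤ eLpNorm (V - W) p (μ.prod μ) := by
  set U := V - W
  have hU : AEStronglyMeasurable U (μ.prod μ) := hV.sub hW
  have hswap : MeasurePreserving Prod.swap (μ.prod μ) (μ.prod μ) := Measure.measurePreserving_swap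
  -- antisymmetry of `V` makes `V - antisymmetrize W` the antisymmetrization of `U = V - W`
  have hae : V - antisymmetrize W =ᵐ[μ.prod μ] (2⁻¹ : ℝ) • (U - U ∘ Prod.swap) := by
    filter_upwards [hanti] with q hq
    simp only [Pi.sub_apply, Pi.smul_apply, Function.comp_apply, antisymmetrize, U]
    rw [hq]
    module
  calc eLpNorm (V - antisymmetrize W) p (μ.prod μ)
      = 2⁻¹ * eLpNorm (U - U ∘ Prod.swap) p (μ.prod μ) := by
        have htwo : ‖(2 : ℝ)‖ₑ = 2 := mod_cast Real.enorm_natCast 2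
        rw [eLpNorm_congr_ae hae, eLpNorm_const_smul, enorm_inv two_ne_zero, htwo]
    _ ≤ 2⁻¹ * (eLpNorm U p (μ.prod μ) + eLpNorm (U ∘ Prod.swap) p (μ.prod μ)) := by
        gcongr
        exact eLpNorm_sub_le hU (hU.comp_measurePreserving hswap) hp
    _ = eLpNorm U p (μ.prod μ) := by
        rw [eLpNorm_comp_measurePreserving hU hswap, ← two_mul, ← mul_assoc,
          ENNReal.inv_mul_cancel two_ne_zero ENNReal.ofNat_ne_top, one_mul]

end Antisymmetrize

theorem MeasureTheory.Measure.addHaar_prod_diagonal {E : Type*} [NormedAddCommGroup E]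
    [NormedSpace ℝ E] [FiniteDimensional ℝ E] [Nontrivial E] [MeasurableSpace E] [BorelSpace E]
    (μ : Measure E) [μ.IsAddHaarMeasure] : μ.prod μ (Set.diagonal E) = 0 := by
  set D := LinearMap.ker (LinearMap.fst ℝ E E - LinearMap.snd ℝ E E)
  have hdiag : Set.diagonal E = D := by
    ext q
    simp [D, sub_eq_zero]
  rw [hdiag]
  refine Measure.addHaar_submodule _ _ fun htop => ?_
  obtain ⟨x, hx⟩ := exists_ne (0 : E)
  have hmem : (x, 0) ∈ D := htop ▸ trivial
  simp [D, hx] at hmem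

theorem ContDiffBump.exists_seq_tendsto_rOut_zero {E : Type*} [NormedAddCommGroup E]
    [NormedSpace ℝ E] [HasContDiffBump E] (c : E) :
    ∃ φ : ℕ → ContDiffBump c, Tendsto (fun n => (φ n).rOut) atTop (𝓝 0) :=
  ⟨fun n => ⟨1 / (n + 2), 1 / (n + 1), by positivity,
    one_div_lt_one_div_of_lt (by positivity) (by linarith)⟩,
    tendsto_one_div_add_atTop_nhds_zero_nat⟩

section CutOffDiagonal

variable {E F : Type*} [NormedAddCommGroup E] [NormedSpace ℝ E] [HasContDiffBump E]
  [NormedAddCommGroup F] [NormedSpace ℝ F]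

def cutOffDiagonal (φ : ContDiffBump (0 : E)) (W : E × E → F) (q : E × E) : F :=
  (1 - φ (q.1 - q.2)) • W q

variable {φ : ContDiffBump (0 : E)} {W : E × E → F}

theorem cutOffDiagonal_eq_zero {q : E × E} (hq : ‖q.1 - q.2‖ ≤ φ.rIn) :
    cutOffDiagonal φ W q = 0 := by
  rw [cutOffDiagonal, φ.one_of_mem_closedBall (mem_closedBall_zero_iff.2 hq), sub_self, zero_smul]

theorem cutOffDiagonal_swap (hW : ∀ q, W q.swap = -W q) (q : E × E) :
    cutOffDiagonal φ W q.swap = -cutOffDiagonal φ W q := by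
  rw [cutOffDiagonal, cutOffDiagonal, Prod.fst_swap, Prod.snd_swap, ← neg_sub q.1, φ.neg, hW,
    smul_neg]

theorem sub_cutOffDiagonal : W - cutOffDiagonal φ W = fun q => φ (q.1 - q.2) • W q := by
  ext q
  simp [cutOffDiagonal, sub_smul]

theorem ContDiff.cutOffDiagonal {n : ℕ∞} (hW : ContDiff ℝ n W) :
    ContDiff ℝ n (cutOffDiagonal φ W) :=
  (contDiff_const.sub (φ.contDiff.comp (contDiff_fst.sub contDiff_snd))).smul hW

theorem HasCompactSupport.cutOffDiagonal (hW : HasCompactSupport W) :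
    HasCompactSupport (cutOffDiagonal φ W) :=
  hW.mono (Function.support_smul_subset_right _ _)

theorem tendsto_eLpNorm_sub_cutOffDiagonal [FiniteDimensional ℝ E] [Nontrivial E]
    [MeasurableSpace E] [BorelSpace E] (μ : Measure E) [μ.IsAddHaarMeasure] {p : ℝ≥0∞}
    (hp : p ≠ ∞) {ι : Type*} {l : Filter ι} [l.IsCountablyGenerated]
    {φ : ι → ContDiffBump (0 : E)} (hφ : Tendsto (fun i => (φ i).rOut) l (𝓝 0))
    (hW : MemLp W p (μ.prod μ)) :
    Tendsto (fun i => eLpNorm (W - cutOffDiagonal (φ i) W) p (μ.prod μ)) l (𝓝 0) := by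
  simp_rw [sub_cutOffDiagonal]
  refine tendsto_eLpNorm_zero_of_dominated hp (.of_forall fun i => ?_) hW
    (.of_forall fun i => .of_forall fun q => ?_) ?_
  · exact ((φ i).continuous.comp (continuous_fst.sub continuous_snd)).aestronglyMeasurable.smul
      hW.aestronglyMeasurable
  · rw [norm_smul, Real.norm_of_nonneg (φ i).nonneg]
    exact mul_le_of_le_one_left (norm_nonneg _) (φ i).le_one
  -- off the null diagonal, `φ i (q.1 - q.2)` vanishes as soon as `rOut < ‖q.1 - q.2‖`
  filter_upwards [measure_eq_zero_iff_ae_notMem.1 (Measure.addHaar_prod_diagonal μ)] with q hq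
  have hpos : 0 < ‖q.1 - q.2‖ := norm_pos_iff.2 (sub_ne_zero.2 hq)
  refine tendsto_const_nhds.congr' ?_
  filter_upwards [hφ.eventually (gt_mem_nhds hpos)] with i hi
  rw [(φ i).zero_of_le_dist (by rw [dist_zero_right]; exact hi.le), zero_smul]

end CutOffDiagonal

/-- Density of `AS_c^∞` in `AS`: every `L²` vector field on `ℝ³ × ℝ³` which is
antisymmetric under the swap `(v,v∗) ↦ (v∗,v)` can be approximated in `L²` by smooth
compactly supported antisymmetric vector fields vanishing in a neighbourhood of the
diagonal. -/
theorem antisymmetric_smooth_fields_dense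
    (V : E3 × E3 → E3) (hV : MemLp V 2 volume)
    (hanti : ∀ᵐ q : E3 × E3, V q = - V (q.2, q.1))
    (η : ℝ) (hη : 0 < η) :
    ∃ W : E3 × E3 → E3, ContDiff ℝ (⊤ : ℕ∞) W ∧ HasCompactSupport W ∧
      (∀ v w : E3, W (v, w) = - W (w, v)) ∧
      (∃ δ > 0, ∀ v w : E3, ‖v - w‖ ≤ δ → W (v, w) = 0) ∧
      eLpNorm (fun q => V q - W q) 2 volume < ENNReal.ofReal η := by
  obtain ⟨W₀, hW₀_supp, hW₀_smooth, hVW₀⟩ :=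
    hV.exist_eLpNorm_sub_le ENNReal.ofNat_ne_top one_le_two (half_pos hη)
  set W₁ := antisymmetrize W₀
  have hW₁_smooth : ContDiff ℝ (⊤ : ℕ∞) W₁ := hW₀_smooth.antisymmetrize
  have hW₁_supp : HasCompactSupport W₁ := hW₀_supp.antisymmetrize
  have hVW₁ : eLpNorm (V - W₁) 2 volume ≤ ENNReal.ofReal (η / 2) :=
    (eLpNorm_sub_antisymmetrize_le one_le_two hV.aestronglyMeasurable
      hW₀_smooth.continuous.aestronglyMeasurable hanti).trans hVW₀
  obtain ⟨φ, hφ⟩ := ContDiffBump.exists_seq_tendsto_rOut_zero (0 : E3)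
  obtain ⟨n, hW₁W⟩ := ((tendsto_eLpNorm_sub_cutOffDiagonal volume (p := 2) ENNReal.ofNat_ne_top
    hφ (hW₁_smooth.continuous.memLp_of_hasCompactSupport hW₁_supp)).eventually_lt_const
    (ENNReal.ofReal_pos.2 (half_pos hη))).exists
  set W := cutOffDiagonal (φ n) W₁
  have hW_smooth : ContDiff ℝ (⊤ : ℕ∞) W := hW₁_smooth.cutOffDiagonal
  refine ⟨W, hW_smooth, hW₁_supp.cutOffDiagonal,
    fun v w => cutOffDiagonal_swap (antisymmetrize_swap W₀) (w, v),
    ⟨(φ n).rIn, (φ n).rIn_pos, fun v w hvw => cutOffDiagonal_eq_zero hvw⟩, ?_⟩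
  calc eLpNorm (fun q => V q - W q) 2 volume
      ≤ eLpNorm (V - W₁) 2 volume + eLpNorm (W₁ - W) 2 volume := by
        rw [show (fun q => V q - W q) = (V - W₁) + (W₁ - W) from (sub_add_sub_cancel _ _ _).symm]
        exact eLpNorm_add_le
          (hV.aestronglyMeasurable.sub hW₁_smooth.continuous.aestronglyMeasurable)
          (hW₁_smooth.sub hW_smooth).continuous.aestronglyMeasurable one_le_two
    _ < ENNReal.ofReal (η / 2) + ENNReal.ofReal (η / 2) :=
      ENNReal.add_lt_add_of_le_of_lt (ne_top_of_le_ne_top ENNReal.ofReal_ne_top hVW₁) hVW₁ hW₁W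
    _ = ENNReal.ofReal η := by
      rw [← ENNReal.ofReal_add (half_pos hη).le (half_pos hη).le, add_halves]
end
end

section
/- Let ε ∈ (0, 1], let β^ε : (0, ε/2] → [0, ∞) be measurable with ∫₀^{ε/2} θ² β^ε(θ) dθ < ∞, and let γ ∈ [−4, 0); write |z|^γ_kin = 1 for |z| ≤ 1 and |z|^γ_kin = |z|^γ for |z| ≥ 1. Let f : ℝ³ → [0, ∞) be integrable with finite second moment and set F = √f. Fix R > 1 and χ_R ∈ C_c^∞(ℝ³) with 0 ≤ χ_R ≤ 1, χ_R ≡ 1 on B_R, supp χ_R ⊂ B_{R+1}, Lipschitz constant at most 2. Set C₂ = 150π · ( ∫∫_{ℝ⁶} (|v|² + |v∗|²) f(v) f(v∗) dv dv∗ ) · ( ∫₀^{ε/2} θ² β^ε(θ) dθ ). Then ∫∫_{ℝ⁶} ∫₀^{ε/2} β^ε(θ) ∫₀^{2π} |v−v∗|^γ_kin f(v∗) (F(v′) − F(v))² dφ dθ dv∗ dv + C₂ ≥ ((2√2(R+1))^γ / 2) ∫∫_{ℝ⁶} ∫₀^{ε/2} β^ε(θ) ∫₀^{2π} f(v∗)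 χ_R(v∗) (F(v′)χ_R(v′) − F(v)χ_R(v))² dφ dθ dv∗ dv. -/
/-!
With `F = √f`, `v' = vPost v v∗ σ` and `k·σ = cos θ`, split
`(F(v')χ(v') − F(v)χ(v))² ≤ 2χ(v')²(F(v') − F(v))² + 2F(v)²(χ(v') − χ(v))²`.
In the first term `χ(v∗)χ(v') ≠ 0` forces `|v∗|, |v'| < R + 1`; as `cos θ ≥ 0`,
`|v − v∗|² ≤ 2|v' − v∗|² < 8(R + 1)²`, so there the kinetic weight is at least
`(2√2(R + 1))^γ`. In the second term the Lipschitz bound and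
`|v' − v|² = |v − v∗|²(1 − cos θ)/2 ≤ θ²|v − v∗|²/4` leave `2θ²(|v|² + |v∗|²) f(v)`, whose
integral against `f(v∗) β(θ)` over the angles and velocities is `4π` times the two moments,
well below `C₂`.
-/

noncomputable section
open Real MeasureTheory Filter Topology
open scoped RealInnerProductSpace

/-- Unit vector `k = (v − v∗)/|v − v∗|`. -/
def unitK (v w : E3) : E3 := ‖v - w‖⁻¹ • (v - w)

/-- Orthogonal projection `Π[z]u = u − ⟨z,u⟩z/|z|²` onto the plane orthogonal to `z`. -/
def projPerp (z u : E3) : E3 := u - ((‖z‖ ^ 2)⁻¹ * ⟪z, u⟫) • z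

/-- `(div_v − div_{v∗}) F` for a vector field `F : ℝ³ × ℝ³ → ℝ³`. -/
def divDiff (F : E3 × E3 → E3) (v w : E3) : ℝ :=
  LinearMap.trace ℝ E3 ((fderiv ℝ (fun z => F (z, w)) v : E3 →L[ℝ] E3) : E3 →ₗ[ℝ] E3)
    - LinearMap.trace ℝ E3 ((fderiv ℝ (fun z => F (v, z)) w : E3 →L[ℝ] E3) : E3 →ₗ[ℝ] E3)

/-- `(∇_v − ∇_{v∗})ψ` for a scalar function `ψ : ℝ³ × ℝ³ → ℝ`. -/
def gradDiff (ψ : E3 × E3 → ℝ) (q : E3 × E3) : E3 :=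
  gradient (fun z => ψ (z, q.2)) q.1 - gradient (fun z => ψ (q.1, z)) q.2

/-- Discrete gradient `∇̄ψ(v,v∗,σ) = ψ(v',v∗') + ψ(v∗',v') − ψ(v,v∗) − ψ(v∗,v)` for a
function of two velocities. -/
def barGrad2 (ψ : E3 × E3 → ℝ) (v w σ : E3) : ℝ :=
  ψ (vPost v w σ, vPostStar v w σ) + ψ (vPostStar v w σ, vPost v w σ) - ψ (v, w) - ψ (w, v)

open scoped ENNReal

/-- Kinetic cutoff `|z|^γ_kin`: equal to `1` for `|z| ≤ 1` and to `|z|^γ` for `|z| ≥ 1`. -/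
def kinCutoff (γ : ℝ) (z : E3) : ℝ := if ‖z‖ ≤ 1 then 1 else ‖z‖ ^ γ

lemma kinCutoff_nonneg (γ : ℝ) (z : E3) : 0 ≤ kinCutoff γ z := by
  unfold kinCutoff
  split_ifs
  exacts [zero_le_one, Real.rpow_nonneg (norm_nonneg z) γ]

lemma rpow_le_kinCutoff {γ X : ℝ} {z : E3} (hγ : γ ≤ 0) (hX : 1 ≤ X) (hz : ‖z‖ ≤ X) :
    X ^ γ ≤ kinCutoff γ z := by
  unfold kinCutoff
  split_ifs with hz1
  · exact Real.rpow_le_one_of_one_le_of_nonpos hX hγ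
  · exact Real.rpow_le_rpow_of_nonpos (by linarith) hz hγ

lemma vPost_self (v σ : E3) : vPost v v σ = v := by
  unfold vPost
  rw [sub_self, norm_zero]
  module

lemma norm_smul_unitK (v w : E3) : ‖v - w‖ • unitK v w = v - w := by
  rcases eq_or_ne v w with rfl | hvw
  · simp
  · rw [unitK, smul_smul, mul_inv_cancel₀ (norm_ne_zero_iff.mpr (sub_ne_zero.mpr hvw)),
      one_smul]

lemma norm_unitK {v w : E3} (hvw : v ≠ w) : ‖unitK v w‖ = 1 := by
  rw [unitK, norm_smul, norm_inv, norm_norm,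
    inv_mul_cancel₀ (norm_ne_zero_iff.mpr (sub_ne_zero.mpr hvw))]

lemma norm_cos_smul_add_sin_smul {E : Type*} [NormedAddCommGroup E] [InnerProductSpace ℝ E]
    {x y : E} (t : ℝ) (hx : ‖x‖ = 1) (hy : ‖y‖ = 1) (hxy : ⟪x, y⟫ = 0) :
    ‖Real.cos t • x + Real.sin t • y‖ = 1 := by
  have hsq : ‖Real.cos t • x + Real.sin t • y‖ ^ 2 = 1 := by
    rw [norm_add_sq_real, norm_smul, norm_smul, real_inner_smul_left, real_inner_smul_right,
      hx, hy, hxy, Real.norm_eq_abs, Real.norm_eq_abs]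
    nlinarith [Real.sin_sq_add_cos_sq t, sq_abs (Real.sin t), sq_abs (Real.cos t)]
  rwa [pow_eq_one_iff_of_nonneg (norm_nonneg _) two_ne_zero] at hsq

section sigmaDir

variable {k h i : E3} (θ φ : ℝ)

lemma inner_sigmaDir (hkh : ⟪k, h⟫ = 0) (hki : ⟪k, i⟫ = 0) (hk : ‖k‖ = 1) :
    ⟪k, sigmaDir k h i θ φ⟫ = Real.cos θ := by
  simp only [sigmaDir, inner_add_right, real_inner_smul_right, real_inner_self_eq_norm_sq,
    hkh, hki, hk]
  ring

lemma norm_sigmaDir (hkh : ⟪k, h⟫ = 0) (hki : ⟪k, i⟫ = 0) (hhi : ⟪h, i⟫ = 0)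
    (hk : ‖k‖ = 1) (hh : ‖h‖ = 1) (hi : ‖i‖ = 1) : ‖sigmaDir k h i θ φ‖ = 1 := by
  have hku : ⟪k, Real.cos φ • h + Real.sin φ • i⟫ = 0 := by
    simp only [inner_add_right, real_inner_smul_right, hkh, hki, mul_zero, add_zero]
  exact norm_cos_smul_add_sin_smul θ hk (norm_cos_smul_add_sin_smul φ hh hi hhi) hku

end sigmaDir

section vPost

variable (v w : E3) {σ : E3}

lemma inner_sub_eq_norm_mul_inner_unitK (x : E3) : ⟪v - w, x⟫ = ‖v - w‖ * ⟪unitK v w, x⟫ := by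
  rw [← real_inner_smul_left, norm_smul_unitK]

lemma norm_vPost_sub_left_sq (hσ : ‖σ‖ = 1) :
    ‖vPost v w σ - v‖ ^ 2 = ‖v - w‖ ^ 2 * (1 - ⟪unitK v w, σ⟫) / 2 := by
  have : vPost v w σ - v = (‖v - w‖ / 2) • σ - (2 : ℝ)⁻¹ • (v - w) := by
    unfold vPost; module
  rw [this, norm_sub_sq_real, norm_smul, norm_smul, real_inner_smul_left,
    real_inner_smul_right, hσ, real_inner_comm, inner_sub_eq_norm_mul_inner_unitK]
  simp only [Real.norm_eq_abs, abs_div, abs_norm, abs_inv, abs_two]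
  ring

lemma norm_vPost_sub_right_sq (hσ : ‖σ‖ = 1) :
    ‖vPost v w σ - w‖ ^ 2 = ‖v - w‖ ^ 2 * (1 + ⟪unitK v w, σ⟫) / 2 := by
  have : vPost v w σ - w = (2 : ℝ)⁻¹ • (v - w) + (‖v - w‖ / 2) • σ := by
    unfold vPost; module
  rw [this, norm_add_sq_real, norm_smul, norm_smul, real_inner_smul_left,
    real_inner_smul_right, hσ, inner_sub_eq_norm_mul_inner_unitK]
  simp only [Real.norm_eq_abs, abs_div, abs_norm, abs_inv, abs_two]
  ring

lemma norm_vPost_sub_left_sq_le (hσ : ‖σ‖ = 1) {θ : ℝ} (hkσ : ⟪unitK v w, σ⟫ = Real.cos θ) :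
    ‖vPost v w σ - v‖ ^ 2 ≤ θ ^ 2 / 4 * ‖v - w‖ ^ 2 := by
  rw [norm_vPost_sub_left_sq v w hσ, hkσ]
  nlinarith [Real.one_sub_sq_div_two_le_cos (x := θ), sq_nonneg ‖v - w‖]

end vPost

lemma norm_lt_of_tsupport_subset_ball {E : Type*} [NormedAddCommGroup E] {χ : E → ℝ} {ρ : ℝ}
    (hχ : tsupport χ ⊆ Metric.ball 0 ρ) {v : E} (hv : χ v ≠ 0) : ‖v‖ < ρ := by
  simpa using hχ (subset_tsupport χ hv)

section cutoff

variable {γ R : ℝ} {χ : E3 → ℝ} {v w σ : E3}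

lemma one_le_two_mul_sqrt_two_mul (hR : 0 ≤ R) : 1 ≤ 2 * Real.sqrt 2 * (R + 1) := by
  have : 1 ≤ Real.sqrt 2 := Real.one_le_sqrt.mpr one_le_two
  nlinarith

lemma rpow_mul_cutoff_le_kinCutoff (hγ : γ ≤ 0) (hR : 0 ≤ R)
    (hχ01 : ∀ v, χ v ∈ Set.Icc (0 : ℝ) 1) (hχsupp : tsupport χ ⊆ Metric.ball (0 : E3) (R + 1))
    (hσ : ‖σ‖ = 1) (hkσ : 0 ≤ ⟪unitK v w, σ⟫) :
    (2 * Real.sqrt 2 * (R + 1)) ^ γ * (χ w * χ (vPost v w σ) ^ 2) ≤ kinCutoff γ (v - w) := by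
  set X := 2 * Real.sqrt 2 * (R + 1)
  have hX : 1 ≤ X := one_le_two_mul_sqrt_two_mul hR
  by_cases hχ0 : χ w = 0 ∨ χ (vPost v w σ) = 0
  · rcases hχ0 with hχ0 | hχ0 <;> simp [hχ0, kinCutoff_nonneg]
  obtain ⟨hχw, hχv'⟩ := not_or.mp hχ0
  have hw := norm_lt_of_tsupport_subset_ball hχsupp hχw
  have hv' := norm_lt_of_tsupport_subset_ball hχsupp hχv'
  have hv'w : ‖vPost v w σ - w‖ < 2 * (R + 1) := (norm_sub_le _ _).trans_lt (by linarith)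
  have hvw : ‖v - w‖ ≤ X := by
    have hsq : ‖v - w‖ ^ 2 ≤ 2 * ‖vPost v w σ - w‖ ^ 2 := by
      rw [norm_vPost_sub_right_sq v w hσ]
      nlinarith [sq_nonneg ‖v - w‖]
    have hX2 : X ^ 2 = 8 * (R + 1) ^ 2 := by
      simp only [X, mul_pow, Real.sq_sqrt zero_le_two]; ring
    refine (pow_le_pow_iff_left₀ (norm_nonneg _) (by linarith) two_ne_zero).mp ?_
    nlinarith [norm_nonneg (vPost v w σ - w)]
  have hweight : χ w * χ (vPost v w σ) ^ 2 ≤ 1 :=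
    mul_le_one₀ (hχ01 w).2 (sq_nonneg _) (pow_le_one₀ (hχ01 _).1 (hχ01 _).2)
  calc X ^ γ * (χ w * χ (vPost v w σ) ^ 2) ≤ X ^ γ * 1 :=
        mul_le_mul_of_nonneg_left hweight (Real.rpow_nonneg (by linarith) γ)
    _ ≤ kinCutoff γ (v - w) := by rw [mul_one]; exact rpow_le_kinCutoff hγ hX hvw

lemma sq_cutoff_vPost_sub_le {K : NNReal} (hχ : LipschitzWith K χ) (hσ : ‖σ‖ = 1) {θ : ℝ}
    (hkσ : ⟪unitK v w, σ⟫ = Real.cos θ) :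
    (χ (vPost v w σ) - χ v) ^ 2 ≤ K ^ 2 * θ ^ 2 / 4 * ‖v - w‖ ^ 2 := by
  have hlip : |χ (vPost v w σ) - χ v| ≤ K * ‖vPost v w σ - v‖ := by
    simpa [Real.dist_eq, dist_eq_norm] using hχ.dist_le_mul (vPost v w σ) v
  calc (χ (vPost v w σ) - χ v) ^ 2 ≤ (K * ‖vPost v w σ - v‖) ^ 2 := by
        rw [← sq_abs]; gcongr
    _ ≤ K ^ 2 * (θ ^ 2 / 4 * ‖v - w‖ ^ 2) := by
        rw [mul_pow]; gcongr; exact norm_vPost_sub_left_sq_le v w hσ hkσ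
    _ = K ^ 2 * θ ^ 2 / 4 * ‖v - w‖ ^ 2 := by ring

lemma rpow_mul_sq_cutoff_sub_le (hγ : γ ≤ 0) (hR : 0 ≤ R)
    (hχ01 : ∀ v, χ v ∈ Set.Icc (0 : ℝ) 1) (hχsupp : tsupport χ ⊆ Metric.ball (0 : E3) (R + 1))
    (hχlip : LipschitzWith 2 χ) (hσ : ‖σ‖ = 1) {θ : ℝ} (hkσ : ⟪unitK v w, σ⟫ = Real.cos θ)
    (hcos : 0 ≤ Real.cos θ) (a a' : ℝ) :
    (2 * Real.sqrt 2 * (R + 1)) ^ γ / 2 * (χ w * (a' * χ (vPost v w σ) - a * χ v) ^ 2)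
      ≤ kinCutoff γ (v - w) * (a' - a) ^ 2 + θ ^ 2 * (2 * (‖v‖ ^ 2 + ‖w‖ ^ 2)) * a ^ 2 := by
  set X := 2 * Real.sqrt 2 * (R + 1)
  set χ' := χ (vPost v w σ)
  have hXγ : 0 ≤ X ^ γ := Real.rpow_nonneg (by linarith [one_le_two_mul_sqrt_two_mul hR]) γ
  have hXγχ : X ^ γ * χ w ≤ 1 :=
    mul_le_one₀ (Real.rpow_le_one_of_one_le_of_nonpos (one_le_two_mul_sqrt_two_mul hR) hγ)
      (hχ01 w).1 (hχ01 w).2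
  have hsplit :
      (a' * χ' - a * χ v) ^ 2 ≤ 2 * χ' ^ 2 * (a' - a) ^ 2 + 2 * a ^ 2 * (χ' - χ v) ^ 2 := by
    nlinarith [sq_nonneg (χ' * (a' - a) - a * (χ' - χ v))]
  have hχdiff : (χ' - χ v) ^ 2 ≤ θ ^ 2 * (2 * (‖v‖ ^ 2 + ‖w‖ ^ 2)) := by
    have hvw : ‖v - w‖ ^ 2 ≤ 2 * (‖v‖ ^ 2 + ‖w‖ ^ 2) := by
      nlinarith [norm_sub_le v w, norm_nonneg (v - w), sq_nonneg (‖v‖ - ‖w‖)]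
    have := sq_cutoff_vPost_sub_le hχlip hσ hkσ
    push_cast at this
    nlinarith [sq_nonneg θ]
  calc X ^ γ / 2 * (χ w * (a' * χ' - a * χ v) ^ 2)
      ≤ X ^ γ / 2 * (χ w * (2 * χ' ^ 2 * (a' - a) ^ 2 + 2 * a ^ 2 * (χ' - χ v) ^ 2)) := by
        have := (hχ01 w).1; gcongr
    _ = X ^ γ * (χ w * χ' ^ 2) * (a' - a) ^ 2 + X ^ γ * χ w * a ^ 2 * (χ' - χ v) ^ 2 := by ring
    _ ≤ kinCutoff γ (v - w) * (a' - a) ^ 2 + 1 * a ^ 2 * (θ ^ 2 * (2 * (‖v‖ ^ 2 + ‖w‖ ^ 2))) := by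
        gcongr
        exact rpow_mul_cutoff_le_kinCutoff hγ hR hχ01 hχsupp hσ (hkσ ▸ hcos)
    _ = kinCutoff γ (v - w) * (a' - a) ^ 2 + θ ^ 2 * (2 * (‖v‖ ^ 2 + ‖w‖ ^ 2)) * a ^ 2 := by ring

end cutoff

lemma truncated_integrand_le {γ R : ℝ} {f χ : E3 → ℝ} (hγ : γ ≤ 0) (hR : 0 ≤ R)
    (hf0 : ∀ v, 0 ≤ f v) (hχ01 : ∀ v, χ v ∈ Set.Icc (0 : ℝ) 1)
    (hχsupp : tsupport χ ⊆ Metric.ball (0 : E3) (R + 1)) (hχlip : LipschitzWith 2 χ)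
    {v w h i : E3} (hframe : v ≠ w → ‖h‖ = 1 ∧ ‖i‖ = 1 ∧
      ⟪unitK v w, h⟫ = 0 ∧ ⟪unitK v w, i⟫ = 0 ∧ ⟪h, i⟫ = 0)
    {b θ : ℝ} (hb : 0 ≤ b) (hcos : 0 ≤ Real.cos θ) (φ : ℝ) :
    (2 * Real.sqrt 2 * (R + 1)) ^ γ / 2 * (b * f w * χ w *
        (Real.sqrt (f (vPost v w (sigmaDir (unitK v w) h i θ φ))) *
            χ (vPost v w (sigmaDir (unitK v w) h i θ φ)) - Real.sqrt (f v) * χ v) ^ 2)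
      ≤ b * kinCutoff γ (v - w) * f w *
          (Real.sqrt (f (vPost v w (sigmaDir (unitK v w) h i θ φ))) - Real.sqrt (f v)) ^ 2
        + θ ^ 2 * b * (2 * ((‖v‖ ^ 2 + ‖w‖ ^ 2) * (f v * f w))) := by
  rcases eq_or_ne v w with rfl | hvw
  · simp only [vPost_self, sub_self, ne_eq, OfNat.ofNat_ne_zero, not_false_eq_true, zero_pow,
      mul_zero, zero_add]
    have := hf0 v
    positivity
  obtain ⟨hh, hi, hkh, hki, hhi⟩ := hframe hvw
  have hk := norm_unitK hvw
  have hlocal := rpow_mul_sq_cutoff_sub_le hγ hR hχ01 hχsupp hχlip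
    (norm_sigmaDir θ φ hkh hki hhi hk hh hi) (inner_sigmaDir θ φ hkh hki hk) hcos
    (Real.sqrt (f v)) (Real.sqrt (f (vPost v w (sigmaDir (unitK v w) h i θ φ))))
  rw [Real.sq_sqrt (hf0 v)] at hlocal
  have hbf : 0 ≤ b * f w := mul_nonneg hb (hf0 w)
  calc _ = b * f w * ((2 * Real.sqrt 2 * (R + 1)) ^ γ / 2 * (χ w *
        (Real.sqrt (f (vPost v w (sigmaDir (unitK v w) h i θ φ))) *
            χ (vPost v w (sigmaDir (unitK v w) h i θ φ)) - Real.sqrt (f v) * χ v) ^ 2)) := by ring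
    _ ≤ _ := mul_le_mul_of_nonneg_left hlocal hbf
    _ = _ := by ring

lemma lintegral_lintegral_lintegral_le_add {α β δ : Type*} [MeasurableSpace α]
    [MeasurableSpace β] [MeasurableSpace δ] {μ : Measure α} {ν : Measure β} {ρ : Measure δ}
    {G H : α → β → δ → ℝ≥0∞} {a : β → ℝ≥0∞} {g : α → ℝ≥0∞} {c : ℝ≥0∞}
    (ha : Measurable a) (hg : Measurable g)
    (hGH : ∀ x, ∀ᵐ y ∂ν, ∀ z, c * G x y z ≤ H x y z + a y * g x) :
    c * ∫⁻ x, ∫⁻ y, ∫⁻ z, G x y z ∂ρ ∂ν ∂μ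
      ≤ ∫⁻ x, ∫⁻ y, ∫⁻ z, H x y z ∂ρ ∂ν ∂μ + (∫⁻ x, g x ∂μ) * (∫⁻ y, a y ∂ν) * ρ Set.univ := by
  calc c * ∫⁻ x, ∫⁻ y, ∫⁻ z, G x y z ∂ρ ∂ν ∂μ
      ≤ ∫⁻ x, ∫⁻ y, ∫⁻ z, c * G x y z ∂ρ ∂ν ∂μ := by
        refine (lintegral_const_mul_le _ _).trans (lintegral_mono fun x => ?_)
        refine (lintegral_const_mul_le _ _).trans (lintegral_mono fun y => ?_)
        exact lintegral_const_mul_le _ _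
    _ ≤ ∫⁻ x, ∫⁻ y, ∫⁻ z, (H x y z + a y * g x) ∂ρ ∂ν ∂μ :=
        lintegral_mono fun x => lintegral_mono_ae ((hGH x).mono fun y hy => lintegral_mono hy)
    _ = ∫⁻ x, ∫⁻ y, ∫⁻ z, H x y z ∂ρ ∂ν ∂μ + (∫⁻ x, g x ∂μ) * (∫⁻ y, a y ∂ν) * ρ Set.univ := by
        have hz : ∀ x y, ∫⁻ z, (H x y z + a y * g x) ∂ρ
            = ∫⁻ z, H x y z ∂ρ + a y * (g x * ρ Set.univ) := fun x y => by
          rw [lintegral_add_right _ measurable_const, lintegral_const, mul_assoc]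
        have hy : ∀ x, ∫⁻ y, (∫⁻ z, H x y z ∂ρ + a y * (g x * ρ Set.univ)) ∂ν
            = ∫⁻ y, ∫⁻ z, H x y z ∂ρ ∂ν + (∫⁻ y, a y ∂ν) * (g x * ρ Set.univ) := fun x => by
          rw [lintegral_add_right _ (ha.mul_const _), lintegral_mul_const _ ha]
        simp_rw [hz, hy]
        rw [lintegral_add_right _ ((hg.mul_const _).const_mul _), lintegral_const_mul _
          (hg.mul_const _), lintegral_mul_const _ hg]
        ring

lemma integrable_moment_mul_prod {E : Type*} [NormedAddCommGroup E] [MeasurableSpace E]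
    {μ : Measure E} [SFinite μ] {f : E → ℝ} (hf : Integrable f μ)
    (hmom : Integrable (fun v => ‖v‖ ^ 2 * f v) μ) :
    Integrable (fun q : E × E => (‖q.1‖ ^ 2 + ‖q.2‖ ^ 2) * (f q.1 * f q.2)) (μ.prod μ) := by
  refine ((hmom.mul_prod hf).add (hf.mul_prod hmom)).congr (ae_of_all _ fun q => ?_)
  simp only [Pi.add_apply]
  ring

theorem truncation_lemma_general
    (ε : ℝ) (hε : ε ∈ Set.Ioc (0:ℝ) 1)
    (βε : ℝ → ℝ) (hβm : Measurable βε)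
    (hβ0 : ∀ θ ∈ Set.Ioc (0:ℝ) (ε / 2), 0 ≤ βε θ)
    (hβint : IntegrableOn (fun θ : ℝ => θ ^ 2 * βε θ) (Set.Ioc (0:ℝ) (ε / 2)))
    (γ : ℝ) (hγ : γ ∈ Set.Ico (-4 : ℝ) 0)
    (f : E3 → ℝ) (hfm : Measurable f) (hf0 : ∀ v, 0 ≤ f v) (hfi : Integrable f)
    (hmom : Integrable (fun v : E3 => ‖v‖ ^ 2 * f v))
    (R : ℝ) (hR : 1 < R)
    (χR : E3 → ℝ)
    (hχ01 : ∀ v, χR v ∈ Set.Icc (0:ℝ) 1)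
    (hχsupp : tsupport χR ⊆ Metric.ball (0 : E3) (R + 1))
    (hχlip : LipschitzWith 2 χR)
    (h i : E3 × E3 → E3)
    (honb : ∀ v w : E3, v ≠ w →
      ‖h (v, w)‖ = 1 ∧ ‖i (v, w)‖ = 1 ∧
        ⟪unitK v w, h (v, w)⟫ = 0 ∧ ⟪unitK v w, i (v, w)⟫ = 0 ∧
        ⟪h (v, w), i (v, w)⟫ = 0) :
    ENNReal.ofReal (((2 * Real.sqrt 2 * (R + 1)) ^ γ) / 2) *
        ∫⁻ q : E3 × E3, ∫⁻ θ in Set.Ioc (0:ℝ) (ε / 2), ∫⁻ φ in Set.Ioc (0:ℝ) (2 * π),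
          ENNReal.ofReal (βε θ * f q.2 * χR q.2 *
            (Real.sqrt (f (vPost q.1 q.2 (sigmaDir (unitK q.1 q.2) (h q) (i q) θ φ))) *
                χR (vPost q.1 q.2 (sigmaDir (unitK q.1 q.2) (h q) (i q) θ φ))
              - Real.sqrt (f q.1) * χR q.1) ^ 2)
      ≤ (∫⁻ q : E3 × E3, ∫⁻ θ in Set.Ioc (0:ℝ) (ε / 2), ∫⁻ φ in Set.Ioc (0:ℝ) (2 * π),
            ENNReal.ofReal (βε θ * kinCutoff γ (q.1 - q.2) * f q.2 *
              (Real.sqrt (f (vPost q.1 q.2 (sigmaDir (unitK q.1 q.2) (h q) (i q) θ φ)))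
                - Real.sqrt (f q.1)) ^ 2))
        + ENNReal.ofReal (150 * π *
            (∫ q : E3 × E3, (‖q.1‖ ^ 2 + ‖q.2‖ ^ 2) * (f q.1 * f q.2)) *
            (∫ θ in Set.Ioc (0:ℝ) (ε / 2), θ ^ 2 * βε θ)) := by
  set M := ∫ q : E3 × E3, (‖q.1‖ ^ 2 + ‖q.2‖ ^ 2) * (f q.1 * f q.2)
  set B := ∫ θ in Set.Ioc (0:ℝ) (ε / 2), θ ^ 2 * βε θ
  have hmoment_nonneg : ∀ q : E3 × E3, 0 ≤ (‖q.1‖ ^ 2 + ‖q.2‖ ^ 2) * (f q.1 * f q.2) :=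
    fun q => mul_nonneg (by positivity) (mul_nonneg (hf0 _) (hf0 _))
  have hβ2_nonneg : ∀ θ ∈ Set.Ioc (0:ℝ) (ε / 2), 0 ≤ θ ^ 2 * βε θ :=
    fun θ hθ => mul_nonneg (sq_nonneg θ) (hβ0 θ hθ)
  have hmoment_int : Integrable fun q : E3 × E3 => (‖q.1‖ ^ 2 + ‖q.2‖ ^ 2) * (f q.1 * f q.2) :=
    integrable_moment_mul_prod hfi hmom
  have hM : ∫⁻ q : E3 × E3, ENNReal.ofReal (2 * ((‖q.1‖ ^ 2 + ‖q.2‖ ^ 2) * (f q.1 * f q.2)))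
      = ENNReal.ofReal (2 * M) := by
    rw [← ofReal_integral_eq_lintegral_ofReal
      (hmoment_int.const_mul 2)
      (ae_of_all _ fun q => mul_nonneg zero_le_two (hmoment_nonneg q)), integral_const_mul]
  have hB : ∫⁻ θ in Set.Ioc (0:ℝ) (ε / 2), ENNReal.ofReal (θ ^ 2 * βε θ) = ENNReal.ofReal B :=
    (ofReal_integral_eq_lintegral_ofReal hβint
      (ae_restrict_of_forall_mem measurableSet_Ioc hβ2_nonneg)).symm
  have hc : 0 ≤ (2 * Real.sqrt 2 * (R + 1)) ^ γ / 2 := by positivity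
  refine (lintegral_lintegral_lintegral_le_add (a := fun θ => ENNReal.ofReal (θ ^ 2 * βε θ))
    (g := fun q => ENNReal.ofReal (2 * ((‖q.1‖ ^ 2 + ‖q.2‖ ^ 2) * (f q.1 * f q.2))))
    (by fun_prop) (by fun_prop) fun q => ae_restrict_of_forall_mem measurableSet_Ioc
      fun θ hθ φ => ?_).trans (add_le_add_right ?_ _)
  · have hcos : 0 ≤ Real.cos θ :=
      Real.cos_nonneg_of_mem_Icc ⟨by linarith [hθ.1, pi_pos], by linarith [hθ.2, hε.2, pi_gt_three]⟩
    rw [← ENNReal.ofReal_mul hc, ← ENNReal.ofReal_mul (hβ2_nonneg θ hθ)]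
    refine (ENNReal.ofReal_le_ofReal ?_).trans ENNReal.ofReal_add_le
    exact truncated_integrand_le hγ.2.le (by linarith) hf0 hχ01 hχsupp hχlip (honb q.1 q.2)
      (hβ0 θ hθ) hcos φ
  · have hM0 : 0 ≤ M := integral_nonneg hmoment_nonneg
    have hB0 : 0 ≤ B := setIntegral_nonneg measurableSet_Ioc hβ2_nonneg
    rw [hM, hB, Measure.restrict_apply_univ, Real.volume_Ioc, ← ENNReal.ofReal_mul (by positivity),
      ← ENNReal.ofReal_mul (by positivity)]
    refine ENNReal.ofReal_le_ofReal ?_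
    nlinarith [mul_nonneg hM0 hB0, pi_pos]

/-- Truncation lemma: the dissipation-type quantity with kernel `β^ε` and kinetic cutoff
controls its smoothly truncated version, up to the explicit additive constant
`C₂ = 150π (∫∫ (|v|²+|v∗|²) f f∗)(∫ θ² β^ε)` and the multiplicative constant
`(2√2(R+1))^γ / 2`. -/
theorem truncation_lemma
    (ε : ℝ) (hε : ε ∈ Set.Ioc (0:ℝ) 1)
    (βε : ℝ → ℝ) (hβm : Measurable βε)
    (hβ0 : ∀ θ ∈ Set.Ioc (0:ℝ) (ε / 2), 0 ≤ βε θ)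
    (hβint : IntegrableOn (fun θ : ℝ => θ ^ 2 * βε θ) (Set.Ioc (0:ℝ) (ε / 2)))
    (γ : ℝ) (hγ : γ ∈ Set.Ico (-4 : ℝ) 0)
    (f : E3 → ℝ) (hfm : Measurable f) (hf0 : ∀ v, 0 ≤ f v) (hfi : Integrable f)
    (hmom : Integrable (fun v : E3 => ‖v‖ ^ 2 * f v))
    (R : ℝ) (hR : 1 < R)
    (χR : E3 → ℝ) (hχs : ContDiff ℝ (⊤ : ℕ∞) χR) (hχc : HasCompactSupport χR)
    (hχ01 : ∀ v, χR v ∈ Set.Icc (0:ℝ) 1)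
    (hχ1 : ∀ v ∈ Metric.ball (0 : E3) R, χR v = 1)
    (hχsupp : tsupport χR ⊆ Metric.ball (0 : E3) (R + 1))
    (hχlip : LipschitzWith 2 χR)
    (h i : E3 × E3 → E3) (hhm : Measurable h) (him : Measurable i)
    (honb : ∀ v w : E3, v ≠ w →
      ‖h (v, w)‖ = 1 ∧ ‖i (v, w)‖ = 1 ∧
        ⟪unitK v w, h (v, w)⟫ = 0 ∧ ⟪unitK v w, i (v, w)⟫ = 0 ∧
        ⟪h (v, w), i (v, w)⟫ = 0) :
    ENNReal.ofReal (((2 * Real.sqrt 2 * (R + 1)) ^ γ) / 2) *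
        ∫⁻ q : E3 × E3, ∫⁻ θ in Set.Ioc (0:ℝ) (ε / 2), ∫⁻ φ in Set.Ioc (0:ℝ) (2 * π),
          ENNReal.ofReal (βε θ * f q.2 * χR q.2 *
            (Real.sqrt (f (vPost q.1 q.2 (sigmaDir (unitK q.1 q.2) (h q) (i q) θ φ))) *
                χR (vPost q.1 q.2 (sigmaDir (unitK q.1 q.2) (h q) (i q) θ φ))
              - Real.sqrt (f q.1) * χR q.1) ^ 2)
      ≤ (∫⁻ q : E3 × E3, ∫⁻ θ in Set.Ioc (0:ℝ) (ε / 2), ∫⁻ φ in Set.Ioc (0:ℝ) (2 * π),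
            ENNReal.ofReal (βε θ * kinCutoff γ (q.1 - q.2) * f q.2 *
              (Real.sqrt (f (vPost q.1 q.2 (sigmaDir (unitK q.1 q.2) (h q) (i q) θ φ)))
                - Real.sqrt (f q.1)) ^ 2))
        + ENNReal.ofReal (150 * π *
            (∫ q : E3 × E3, (‖q.1‖ ^ 2 + ‖q.2‖ ^ 2) * (f q.1 * f q.2)) *
            (∫ θ in Set.Ioc (0:ℝ) (ε / 2), θ ^ 2 * βε θ)) :=
  truncation_lemma_general ε hε βε hβm hβ0 hβint γ hγ f hfm hf0 hfi hmom R hR χR hχ01 hχsupp hχlip h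
    i honb
end
end
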